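/- arXiv:1810.05249 — 8 statements merged into one kernel-verified Lean document; each statement's English description precedes it below -/
import Mathlib

section
/- Let p be an odd prime and let a, b be nonzero squarefree integers with v_p(a) ≤ v_p(b), where v_p denotes the p-adic valuation. Then the quaternion algebra ℍ[ℚ_p, a, b] over the p-adic numbers is a division ring (every nonzero element is invertible) if and only if either (i) p ∤ a, p ∣ b, and the image of a in ℤ/pℤ is not a square, or (ii) p ∣ a, p ∣ b, and, writing a = p·a₀ and b = p·b₀, the image of −a₀⁻¹·b₀ in ℤ/pℤ is not a square. -/
/-!
`ℍ[F, a, b]` is a division ring iff its reduced norm `x₁² - a x₂² - b x₃² + a b x₄²` is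
anisotropic, since `x * star x` is that norm. Over `ℚ_[p]` with `p` odd:

* if `a` and `b` are units, `a x² + b y² = 1` is solvable modulo `p` and lifts by Hensel's lemma,
  so the norm is isotropic;
* if `a = u` is a unit and `b = p w` with `w` a unit, the norm is `N(x₁, x₂) - p w N(x₃, x₄)`
  with `N(s, t) = s² - u t²`. When `u` is a square modulo `p` it is a square in `ℤ_[p]` and
  `(√u, 1, 0, 0)` is a zero. Otherwise `N` is anisotropic modulo `p`, so a zero with coprime
  integral coordinates would have all its coordinates divisible by `p`: reduce modulo `p`,
  divide by `p`, reduce again;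
* if `a = p a₀` and `b = p b₀`, a linear change of variables turns the norm into that of
  `ℍ[ℚ_[p], -a₀ b₀, p a₀]`, which is the previous case.

The remaining case `p ∣ a`, `p ∤ b` is excluded by `v_p(a) ≤ v_p(b)`.
-/

open Quaternion

namespace QuaternionAlgebra

variable {R : Type*} [CommRing R] {c₁ c₂ : R}

def reducedNorm (x : ℍ[R, c₁, c₂]) : R :=
  x.re ^ 2 - c₁ * x.imI ^ 2 - c₂ * x.imJ ^ 2 + c₁ * c₂ * x.imK ^ 2

theorem mul_star_eq_coe_reducedNorm (x : ℍ[R, c₁, c₂]) : x * star x = reducedNorm x := by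
  ext <;> simp only [reducedNorm, re_mul, imI_mul, imJ_mul, imK_mul, re_star, imI_star, imJ_star,
    imK_star, re_coe, imI_coe, imJ_coe, imK_coe] <;> ring

theorem star_mul_eq_coe_reducedNorm (x : ℍ[R, c₁, c₂]) : star x * x = reducedNorm x := by
  ext <;> simp only [reducedNorm, re_mul, imI_mul, imJ_mul, imK_mul, re_star, imI_star, imJ_star,
    imK_star, re_coe, imI_coe, imJ_coe, imK_coe] <;> ring

variable {F : Type*} [Field F] {c₁ c₂ : F}

theorem isUnit_iff_reducedNorm_ne_zero (x : ℍ[F, c₁, c₂]) : IsUnit x ↔ reducedNorm x ≠ 0 := by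
  refine ⟨fun hx hN => hx.ne_zero ?_, fun hN => ?_⟩
  · rw [← star_eq_zero, ← hx.mul_right_eq_zero, mul_star_eq_coe_reducedNorm, hN, coe_zero]
  · refine ⟨⟨x, (reducedNorm x)⁻¹ • star x, ?_, ?_⟩, rfl⟩
    · rw [mul_smul_comm, mul_star_eq_coe_reducedNorm, ← coe_smul, smul_eq_mul,
        inv_mul_cancel₀ hN, coe_one]
    · rw [smul_mul_assoc, star_mul_eq_coe_reducedNorm, ← coe_smul, smul_eq_mul,
        inv_mul_cancel₀ hN, coe_one]

theorem forall_isUnit_iff_reducedNorm_anisotropic :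
    (∀ x : ℍ[F, c₁, c₂], x ≠ 0 → IsUnit x) ↔ ∀ x : ℍ[F, c₁, c₂], reducedNorm x = 0 → x = 0 := by
  simp only [isUnit_iff_reducedNorm_ne_zero, not_imp_not]

theorem reducedNorm_anisotropic_mul_mul_iff {c a₀ : F} (b₀ : F) (hc : c ≠ 0) (ha₀ : a₀ ≠ 0) :
    (∀ x : ℍ[F, c * a₀, c * b₀], reducedNorm x = 0 → x = 0) ↔
      ∀ y : ℍ[F, -(a₀ * b₀), c * a₀], reducedNorm y = 0 → y = 0 := by
  constructor
  · intro h y hy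
    have := h ⟨y.re, y.imJ, a₀ * y.imK, y.imI / c⟩ (by
      simp only [reducedNorm] at hy ⊢; field_simp; linear_combination hy)
    simp only [QuaternionAlgebra.ext_iff, re_zero, imI_zero, imJ_zero, imK_zero, mul_eq_zero,
      div_eq_zero_iff, ha₀, hc, false_or, or_false] at this ⊢
    tauto
  · intro h x hx
    have := h ⟨x.re, c * x.imK, x.imI, x.imJ / a₀⟩ (by
      simp only [reducedNorm] at hx ⊢; field_simp; linear_combination hx)
    simp only [QuaternionAlgebra.ext_iff, re_zero, imI_zero, imJ_zero, imK_zero, mul_eq_zero,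
      div_eq_zero_iff, ha₀, hc, false_or, or_false] at this ⊢
    tauto

end QuaternionAlgebra

theorem isSquare_sq_mul_iff {F : Type*} [Field F] {c : F} (hc : c ≠ 0) (x : F) :
    IsSquare (c ^ 2 * x) ↔ IsSquare x := by
  refine ⟨fun ⟨r, hr⟩ => ⟨r / c, ?_⟩, fun ⟨r, hr⟩ => ⟨c * r, by rw [hr]; ring⟩⟩
  field_simp
  linear_combination hr

theorem eq_zero_of_sq_eq_mul_sq {F : Type*} [Field F] {α s t : F} (hα : ¬IsSquare α)
    (h : s ^ 2 = α * t ^ 2) : s = 0 ∧ t = 0 := by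
  have ht : t = 0 := by
    by_contra ht
    exact hα ⟨s / t, by field_simp; linear_combination -h⟩
  subst ht
  exact ⟨pow_eq_zero_iff two_ne_zero |>.mp (by simpa using h), rfl⟩

theorem Squarefree.not_dvd_of_mul_of_not_isUnit {M : Type*} [CommMonoid M] {x y : M}
    (h : Squarefree (x * y)) (hx : ¬IsUnit x) : ¬x ∣ y :=
  fun hxy => hx (h x (mul_dvd_mul_left x hxy))

theorem dvd_of_dvd_of_padicValInt_le {p : ℕ} [Fact p.Prime] {a b : ℤ} (ha : a ≠ 0)
    (hab : padicValInt p a ≤ padicValInt p b) (h : (p : ℤ) ∣ a) : (p : ℤ) ∣ b := by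
  have h1 := ((padicValInt_dvd_iff 1 a).mp (by rwa [pow_one])).resolve_left ha
  simpa using (padicValInt_dvd_iff 1 b).mpr (Or.inr (h1.trans hab))

open Polynomial in
theorem FiniteField.exists_mul_sq_add_mul_sq_eq_one {F : Type*} [Field F] [Fintype F]
    (hF : Fintype.card F % 2 = 1) {u v : F} (hu : u ≠ 0) (hv : v ≠ 0) :
    ∃ x y : F, u * x ^ 2 + v * y ^ 2 = 1 := by
  obtain ⟨x, y, hxy⟩ := FiniteField.exists_root_sum_quadratic
    (f := C u * X ^ 2 - C 1) (g := C v * X ^ 2) (by compute_degree!) (by compute_degree!) hF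
  exact ⟨x, y, by simpa [sub_add_eq_add_sub, sub_eq_zero] using hxy⟩

namespace PadicInt

open Polynomial

variable {p : ℕ} [Fact p.Prime]

theorem toZMod_p : toZMod (p : ℤ_[p]) = 0 := by
  rw [map_natCast, ZMod.natCast_self]

theorem toZMod_eq_zero_iff_dvd (x : ℤ_[p]) : toZMod x = 0 ↔ (p : ℤ_[p]) ∣ x := by
  rw [← RingHom.mem_ker, ker_toZMod, maximalIdeal_eq_span_p, Ideal.mem_span_singleton]

theorem toZMod_ne_zero_iff_isUnit (x : ℤ_[p]) : toZMod x ≠ 0 ↔ IsUnit x := by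
  rw [Ne, ← RingHom.mem_ker, ker_toZMod, IsLocalRing.mem_maximalIdeal, mem_nonunits_iff, not_not]

theorem isUnit_intCast_iff (a : ℤ) : IsUnit (a : ℤ_[p]) ↔ ¬(p : ℤ) ∣ a := by
  rw [← toZMod_ne_zero_iff_isUnit, map_intCast, Ne, ZMod.intCast_zmod_eq_zero_iff_dvd]

theorem isUnit_two (hp2 : p ≠ 2) : IsUnit (2 : ℤ_[p]) := by
  rw [← toZMod_ne_zero_iff_isUnit, map_ofNat]
  exact Ring.two_ne_zero (by rwa [ZMod.ringChar_zmod_n])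

theorem exists_isRoot_of_toZMod_eval_eq_zero {f : ℤ_[p][X]} {s : ℤ_[p]}
    (hf : toZMod (f.eval s) = 0) (hf' : IsUnit (f.derivative.eval s)) : ∃ z, f.IsRoot z := by
  have hlt : ‖f.aeval s‖ < ‖f.derivative.aeval s‖ ^ 2 := by
    rw [coe_aeval_eq_eval, isUnit_iff.mp hf', one_pow, ← mem_nonunits, mem_nonunits_iff,
      ← toZMod_ne_zero_iff_isUnit, not_not]
    exact hf
  obtain ⟨z, hz, -⟩ := hensels_lemma hlt
  exact ⟨z, by rwa [coe_aeval_eq_eval] at hz⟩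

theorem exists_mul_sq_add_eq_zero (hp2 : p ≠ 2) {u c s : ℤ_[p]} (hu : IsUnit u) (hs : IsUnit s)
    (h : toZMod (u * s ^ 2 + c) = 0) : ∃ z, u * z ^ 2 + c = 0 := by
  have hderiv : (derivative (C u * X ^ 2 + C c)).eval s = 2 * u * s := by
    simp only [derivative_add, derivative_C_mul_X_pow, derivative_C, add_zero, eval_C, eval_mul,
      eval_pow, eval_X]
    ring
  obtain ⟨z, hz⟩ := exists_isRoot_of_toZMod_eval_eq_zero (by simpa using h)
    (hderiv ▸ ((isUnit_two hp2).mul hu).mul hs)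
  exact ⟨z, by simpa using hz⟩

theorem isSquare_of_isSquare_toZMod (hp2 : p ≠ 2) {t : ℤ_[p]} (ht : IsUnit t)
    (h : IsSquare (toZMod t)) : IsSquare t := by
  obtain ⟨r, hr⟩ := h
  obtain ⟨s, rfl⟩ := ZMod.ringHom_surjective toZMod r
  have hs : IsUnit s := by
    rw [← toZMod_ne_zero_iff_isUnit] at ht ⊢
    rintro hs
    exact ht (by rw [hr, hs, mul_zero])
  obtain ⟨z, hz⟩ := exists_mul_sq_add_eq_zero hp2 isUnit_one hs (c := -t)
    (by rw [map_add, map_neg, map_mul, map_pow, map_one, hr]; ring)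
  exact ⟨z, by linear_combination -hz⟩

theorem exists_mul_sq_add_mul_sq_eq_one (hp2 : p ≠ 2) {a b : ℤ_[p]} (ha : IsUnit a)
    (hb : IsUnit b) : ∃ x y : ℤ_[p], a * x ^ 2 + b * y ^ 2 = 1 := by
  have hcard : Fintype.card (ZMod p) % 2 = 1 := by
    rw [ZMod.card, ← Nat.odd_iff]
    exact (Fact.out : p.Prime).odd_of_ne_two hp2
  obtain ⟨x₀, y₀, hxy⟩ := FiniteField.exists_mul_sq_add_mul_sq_eq_one hcard
    ((toZMod_ne_zero_iff_isUnit a).mpr ha) ((toZMod_ne_zero_iff_isUnit b).mpr hb)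
  wlog hx₀ : x₀ ≠ 0 generalizing a b x₀ y₀
  · have hy₀ : y₀ ≠ 0 := by
      rintro rfl
      simp [not_not.mp hx₀] at hxy
    obtain ⟨y, x, h⟩ := this hb ha y₀ x₀ (by linear_combination hxy) hy₀
    exact ⟨x, y, by linear_combination h⟩
  obtain ⟨s, rfl⟩ := ZMod.ringHom_surjective toZMod x₀
  obtain ⟨t, rfl⟩ := ZMod.ringHom_surjective toZMod y₀
  obtain ⟨x, hx⟩ := exists_mul_sq_add_eq_zero hp2 ha ((toZMod_ne_zero_iff_isUnit s).mp hx₀)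
    (c := b * t ^ 2 - 1) (by
      simp only [map_add, map_sub, map_mul, map_pow, map_one]
      linear_combination hxy)
  exact ⟨x, t, by linear_combination hx⟩

theorem dvd_of_toZMod_sq_sub_mul_sq_eq_zero {u s t : ℤ_[p]} (hu : ¬IsSquare (toZMod u))
    (h : toZMod (s ^ 2 - u * t ^ 2) = 0) : (p : ℤ_[p]) ∣ s ∧ (p : ℤ_[p]) ∣ t := by
  simp only [← toZMod_eq_zero_iff_dvd]
  exact eq_zero_of_sq_eq_mul_sq hu (by simpa [sub_eq_zero] using h)

theorem dvd_of_sq_sub_mul_sq_sub_mul_eq_zero {u w y₁ y₂ y₃ y₄ : ℤ_[p]}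
    (hu : ¬IsSquare (toZMod u)) (hw : IsUnit w)
    (h : y₁ ^ 2 - u * y₂ ^ 2 - p * w * (y₃ ^ 2 - u * y₄ ^ 2) = 0) :
    ((p : ℤ_[p]) ∣ y₁ ∧ (p : ℤ_[p]) ∣ y₂) ∧ ((p : ℤ_[p]) ∣ y₃ ∧ (p : ℤ_[p]) ∣ y₄) := by
  obtain ⟨⟨z₁, rfl⟩, ⟨z₂, rfl⟩⟩ := dvd_of_toZMod_sq_sub_mul_sq_eq_zero hu (by
    simpa [toZMod_p] using congrArg toZMod h)
  refine ⟨⟨dvd_mul_right _ _, dvd_mul_right _ _⟩, dvd_of_toZMod_sq_sub_mul_sq_eq_zero hu ?_⟩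
  have h' : w * (y₃ ^ 2 - u * y₄ ^ 2) = p * (z₁ ^ 2 - u * z₂ ^ 2) := by
    refine mul_left_cancel₀ prime_p.ne_zero ?_
    linear_combination -h
  have := congrArg toZMod h'
  rw [map_mul, map_mul, toZMod_p, zero_mul] at this
  exact (mul_eq_zero.mp this).resolve_left ((toZMod_ne_zero_iff_isUnit w).mpr hw)

end PadicInt

namespace Padic

open QuaternionAlgebra

variable {p : ℕ} [Fact p.Prime]

theorem exists_eq_mul_primitive {ι : Type*} [Finite ι] (x : ι → ℚ_[p]) (hx : x ≠ 0) :
    ∃ (c : ℚ_[p]) (y : ι → ℤ_[p]), c ≠ 0 ∧ (∀ i, x i = c * y i) ∧ ∃ i, IsUnit (y i) := by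
  obtain ⟨i₀, hi₀⟩ := Function.ne_iff.mp hx
  have : Nonempty ι := ⟨i₀⟩
  obtain ⟨j, hj⟩ := Finite.exists_max fun i => ‖x i‖
  have hxj : x j ≠ 0 := norm_ne_zero_iff.mp ((norm_pos_iff.mpr hi₀).trans_le (hj i₀)).ne'
  let y : ι → ℤ_[p] := fun i => ⟨x i / x j, by
    rw [norm_div]; exact div_le_one_of_le₀ (hj i) (norm_nonneg _)⟩
  have hy : ∀ i, (y i : ℚ_[p]) = x i / x j := fun i => rfl
  refine ⟨x j, y, hxj, fun i => by rw [hy, mul_div_cancel₀ _ hxj], j, ?_⟩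
  rw [PadicInt.isUnit_iff, PadicInt.norm_def, hy, div_self hxj, norm_one]

theorem eq_zero_of_reducedNorm_eq_zero {u w : ℤ_[p]} (hu : ¬IsSquare (PadicInt.toZMod u))
    (hw : IsUnit w) {x : ℍ[ℚ_[p], u, p * w]} (hx : reducedNorm x = 0) : x = 0 := by
  by_contra hx0
  obtain ⟨c, y, hc, hxy, i, hi⟩ := exists_eq_mul_primitive ![x.re, x.imI, x.imJ, x.imK] (by
    contrapose! hx0
    exact QuaternionAlgebra.ext (congrFun hx0 0) (congrFun hx0 1) (congrFun hx0 2)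
      (congrFun hx0 3))
  have hy : y 0 ^ 2 - u * y 1 ^ 2 - p * w * (y 2 ^ 2 - u * y 3 ^ 2) = 0 := by
    have h : ((y 0 ^ 2 - u * y 1 ^ 2 - p * w * (y 2 ^ 2 - u * y 3 ^ 2) : ℤ_[p]) : ℚ_[p]) = 0 := by
      refine (mul_eq_zero.mp ?_).resolve_left (pow_ne_zero 2 hc)
      have h0 : x.re = c * y 0 := hxy 0
      have h1 : x.imI = c * y 1 := hxy 1
      have h2 : x.imJ = c * y 2 := hxy 2
      have h3 : x.imK = c * y 3 := hxy 3
      rw [reducedNorm, h0, h1, h2, h3] at hx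
      push_cast
      linear_combination hx
    exact PadicInt.coe_eq_zero.mp h
  have hp : ¬IsUnit (p : ℤ_[p]) := PadicInt.prime_p.not_isUnit
  obtain ⟨⟨h0, h1⟩, ⟨h2, h3⟩⟩ := PadicInt.dvd_of_sq_sub_mul_sq_sub_mul_eq_zero hu hw hy
  fin_cases i
  exacts [hp (isUnit_of_dvd_unit h0 hi), hp (isUnit_of_dvd_unit h1 hi),
    hp (isUnit_of_dvd_unit h2 hi), hp (isUnit_of_dvd_unit h3 hi)]

theorem reducedNorm_anisotropic_iff (hp2 : p ≠ 2) {u w : ℤ_[p]} (hu : IsUnit u) (hw : IsUnit w) :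
    (∀ x : ℍ[ℚ_[p], u, p * w], reducedNorm x = 0 → x = 0) ↔ ¬IsSquare (PadicInt.toZMod u) := by
  refine ⟨fun h hsq => ?_, fun hu' x => eq_zero_of_reducedNorm_eq_zero hu' hw⟩
  obtain ⟨z, rfl⟩ := PadicInt.isSquare_of_isSquare_toZMod hp2 hu hsq
  have := h ⟨z, 1, 0, 0⟩ (by simp [reducedNorm, sq])
  exact one_ne_zero (congrArg QuaternionAlgebra.imI this)

theorem exists_reducedNorm_eq_zero (hp2 : p ≠ 2) {a b : ℤ_[p]} (ha : IsUnit a) (hb : IsUnit b) :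
    ∃ x : ℍ[ℚ_[p], a, b], x ≠ 0 ∧ reducedNorm x = 0 := by
  obtain ⟨s, t, h⟩ := PadicInt.exists_mul_sq_add_mul_sq_eq_one hp2 ha hb
  refine ⟨⟨1, s, t, 0⟩, fun h0 => one_ne_zero (congrArg QuaternionAlgebra.re h0), ?_⟩
  have h' := congrArg ((↑) : ℤ_[p] → ℚ_[p]) h
  push_cast at h'
  simp only [reducedNorm]
  linear_combination -h'

theorem reducedNorm_anisotropic_intCast_iff (hp2 : p ≠ 2) {a b₀ : ℤ} (ha : ¬(p : ℤ) ∣ a)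
    (hb₀ : ¬(p : ℤ) ∣ b₀) :
    (∀ x : ℍ[ℚ_[p], a, p * b₀], reducedNorm x = 0 → x = 0) ↔ ¬IsSquare (a : ZMod p) := by
  have := reducedNorm_anisotropic_iff hp2 ((PadicInt.isUnit_intCast_iff a).mpr ha)
    ((PadicInt.isUnit_intCast_iff b₀).mpr hb₀)
  rwa [PadicInt.coe_intCast, PadicInt.coe_intCast, map_intCast] at this

theorem reducedNorm_anisotropic_mul_intCast_iff (hp2 : p ≠ 2) {a₀ b₀ : ℤ}
    (ha₀ : ¬(p : ℤ) ∣ a₀) (hb₀ : ¬(p : ℤ) ∣ b₀) :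
    (∀ x : ℍ[ℚ_[p], p * a₀, p * b₀], reducedNorm x = 0 → x = 0) ↔
      ¬IsSquare (-(a₀ : ZMod p)⁻¹ * b₀) := by
  have hp : (p : ℚ_[p]) ≠ 0 := Nat.cast_ne_zero.mpr (Fact.out : p.Prime).ne_zero
  have ha₀ℚ : (a₀ : ℚ_[p]) ≠ 0 := Int.cast_ne_zero.mpr (by rintro rfl; exact ha₀ (dvd_zero _))
  have ha₀' : (a₀ : ZMod p) ≠ 0 := by rwa [Ne, ZMod.intCast_zmod_eq_zero_iff_dvd]
  have hab : ¬(p : ℤ) ∣ -(a₀ * b₀) := by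
    rw [dvd_neg]
    exact (Nat.prime_iff_prime_int.mp Fact.out).not_dvd_mul ha₀ hb₀
  have habℚ : -((a₀ : ℚ_[p]) * b₀) = ((-(a₀ * b₀) : ℤ) : ℚ_[p]) := by push_cast; ring
  have hsq : ((-(a₀ * b₀) : ℤ) : ZMod p) = (a₀ : ZMod p) ^ 2 * (-(a₀ : ZMod p)⁻¹ * b₀) := by
    push_cast
    field_simp
  rw [reducedNorm_anisotropic_mul_mul_iff _ hp ha₀ℚ, habℚ,
    reducedNorm_anisotropic_intCast_iff hp2 hab ha₀, hsq, isSquare_sq_mul_iff ha₀']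

end Padic

theorem quaternionAlgebra_padic_isDivisionRing_iff_general
    (p : ℕ) [Fact p.Prime] (hp2 : p ≠ 2)
    (a b : ℤ)
    (hsa : Squarefree a) (hsb : Squarefree b)
    (hval : padicValInt p a ≤ padicValInt p b) :
    (∀ x : ℍ[ℚ_[p], (a : ℚ_[p]), (b : ℚ_[p])], x ≠ 0 → IsUnit x) ↔
      ((¬ (p : ℤ) ∣ a ∧ (p : ℤ) ∣ b ∧ ¬ IsSquare ((a : ZMod p))) ∨
        ((p : ℤ) ∣ a ∧ (p : ℤ) ∣ b ∧
          ∀ a₀ b₀ : ℤ, a = (p : ℤ) * a₀ → b = (p : ℤ) * b₀ →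
            ¬ IsSquare (-((a₀ : ZMod p))⁻¹ * ((b₀ : ZMod p))))) := by
  rw [QuaternionAlgebra.forall_isUnit_iff_reducedNorm_anisotropic]
  have hp : ¬IsUnit (p : ℤ) := (Nat.prime_iff_prime_int.mp Fact.out).not_isUnit
  by_cases hpb : (p : ℤ) ∣ b
  swap
  · have hpa := mt (dvd_of_dvd_of_padicValInt_le hsa.ne_zero hval) hpb
    obtain ⟨x, hx0, hx⟩ := Padic.exists_reducedNorm_eq_zero hp2
      ((PadicInt.isUnit_intCast_iff a).mpr hpa) ((PadicInt.isUnit_intCast_iff b).mpr hpb)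
    simp only [hpa, hpb, false_and, and_false, or_self, iff_false, not_forall]
    exact ⟨x, hx, hx0⟩
  obtain ⟨b₀, rfl⟩ := hpb
  have hb₀ := hsb.not_dvd_of_mul_of_not_isUnit hp
  have hb : ((p * b₀ : ℤ) : ℚ_[p]) = p * b₀ := by push_cast; rfl
  by_cases hpa : (p : ℤ) ∣ a
  · obtain ⟨a₀, rfl⟩ := hpa
    rw [show ((p * a₀ : ℤ) : ℚ_[p]) = p * a₀ by push_cast; rfl, hb,
      Padic.reducedNorm_anisotropic_mul_intCast_iff hp2 (hsa.not_dvd_of_mul_of_not_isUnit hp) hb₀]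
    simp [(Fact.out : p.Prime).ne_zero]
  · rw [hb, Padic.reducedNorm_anisotropic_intCast_iff hp2 hpa hb₀]
    simp only [hpa, not_false_eq_true, dvd_mul_right, true_and, false_and, or_false]

/-- For an odd prime `p` and nonzero squarefree integers `a, b` with `v_p(a) ≤ v_p(b)`,
the quaternion algebra `ℍ[ℚ_p, a, b]` is a division ring iff (i) `p ∤ a`, `p ∣ b` and
`a` is not a square mod `p`, or (ii) `p ∣ a`, `p ∣ b` and `-(a/p)⁻¹·(b/p)` is not a
square mod `p`. -/
theorem quaternionAlgebra_padic_isDivisionRing_iff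
    (p : ℕ) [Fact p.Prime] (hp2 : p ≠ 2)
    (a b : ℤ) (ha : a ≠ 0) (hb : b ≠ 0)
    (hsa : Squarefree a) (hsb : Squarefree b)
    (hval : padicValInt p a ≤ padicValInt p b) :
    (∀ x : ℍ[ℚ_[p], (a : ℚ_[p]), (b : ℚ_[p])], x ≠ 0 → IsUnit x) ↔
      ((¬ (p : ℤ) ∣ a ∧ (p : ℤ) ∣ b ∧ ¬ IsSquare ((a : ZMod p))) ∨
        ((p : ℤ) ∣ a ∧ (p : ℤ) ∣ b ∧
          ∀ a₀ b₀ : ℤ, a = (p : ℤ) * a₀ → b = (p : ℤ) * b₀ →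
            ¬ IsSquare (-((a₀ : ZMod p))⁻¹ * ((b₀ : ZMod p))))) :=
  quaternionAlgebra_padic_isDivisionRing_iff_general p hp2 a b hsa hsb hval
end

section
/- Let a be an odd squarefree integer. Then the quaternion algebra ℍ[ℚ₂, a, 2] over the 2-adic numbers is a division ring (every nonzero element is invertible) if and only if a ≡ 3 (mod 8) or a ≡ 5 (mod 8). (Equivalently, the Hilbert symbol (a,2) over ℚ₂ equals −1 exactly when a ≡ 3, 5 mod 8.) -/
/-!
Over a field a quaternion `q` is invertible iff its reduced norm `q * star q` is nonzero, so
`ℍ[ℚ₂, a, 2]` is a division ring iff the norm form `t² - a x² - 2 y² + 2a z²` is anisotropic.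
For `a ≡ 1 (mod 8)` resp. `a ≡ 7 (mod 8)`, Hensel's lemma makes `a` resp. `a + 2` a square `s²`
in `ℤ₂`, giving the isotropic vectors `(s, 1, 0, 0)` resp. `(s, 1, 1, 0)`. For `a ≡ 3, 5 (mod 8)`,
scale a zero of the form to a vector in `ℤ₂⁴` with a unit coordinate; reducing it mod 16, where
every square is `0, 1, 4` or `9`, a finite check shows that all its coordinates are even.
-/

open Quaternion Polynomial

namespace QuaternionAlgebra

variable {F : Type*} [Field F]

theorem isUnit_iff_re_mul_star_ne_zero {c₁ c₂ c₃ : F} {q : ℍ[F,c₁,c₂,c₃]} :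
    IsUnit q ↔ (q * star q).re ≠ 0 := by
  set n := (q * star q).re
  have hq : q * star q = n := q.mul_star_eq_coe
  have hq' : star q * q = n := by rw [star_comm_self', hq]
  constructor
  · intro hu hn
    rw [hn, coe_zero, hu.mul_right_eq_zero, star_eq_zero] at hq
    exact not_isUnit_zero (hq ▸ hu)
  · intro hn
    refine ⟨⟨q, n⁻¹ • star q, ?_, ?_⟩, rfl⟩
    · rw [mul_smul_comm, hq, ← coe_smul, smul_eq_mul, inv_mul_cancel₀ hn, coe_one]
    · rw [smul_mul_assoc, hq', ← coe_smul, smul_eq_mul, inv_mul_cancel₀ hn, coe_one]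

theorem forall_ne_zero_isUnit_iff {c₁ c₂ : F} :
    (∀ q : ℍ[F,c₁,c₂], q ≠ 0 → IsUnit q) ↔
      ∀ t x y z : F, t ^ 2 - c₁ * x ^ 2 - c₂ * y ^ 2 + c₁ * c₂ * z ^ 2 = 0 →
        t = 0 ∧ x = 0 ∧ y = 0 ∧ z = 0 := by
  have hre (q : ℍ[F,c₁,c₂]) : (q * star q).re =
      q.re ^ 2 - c₁ * q.imI ^ 2 - c₂ * q.imJ ^ 2 + c₁ * c₂ * q.imK ^ 2 := by
    simp only [re_mul, re_star, imI_star, imJ_star, imK_star]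
    ring
  simp only [isUnit_iff_re_mul_star_ne_zero, hre, ne_eq, not_imp_not]
  refine ⟨fun h t x y z hq ↦ ?_, fun h q hq ↦ ?_⟩
  · simpa [QuaternionAlgebra.ext_iff] using h ⟨t, x, y, z⟩ hq
  · obtain ⟨ht, hx, hy, hz⟩ := h _ _ _ _ hq
    exact QuaternionAlgebra.ext ht hx hy hz

end QuaternionAlgebra

theorem exists_norm_mul_le_one_and_eq_one {K ι : Type*} [NormedDivisionRing K] [Finite ι]
    {v : ι → K} (hv : v ≠ 0) : ∃ c : K, (∀ i, ‖c * v i‖ ≤ 1) ∧ ∃ i, ‖c * v i‖ = 1 := by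
  obtain ⟨j, hj⟩ := Function.ne_iff.1 hv
  have : Nonempty ι := ⟨j⟩
  obtain ⟨i, hi⟩ := Finite.exists_max fun i ↦ ‖v i‖
  have hvi : 0 < ‖v i‖ := (norm_pos_iff.2 hj).trans_le (hi j)
  refine ⟨(v i)⁻¹, fun k ↦ ?_, i, ?_⟩
  · rw [norm_mul, norm_inv, inv_mul_le_one₀ hvi]
    exact hi k
  · rw [inv_mul_cancel₀ (norm_pos_iff.1 hvi), norm_one]

namespace ZMod

theorem sq_mem_zero_one_four_nine (u : ZMod 16) :
    u ^ 2 ∈ ({0, 1, 4, 9} : Finset (ZMod 16)) := by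
  revert u; decide

theorem eight_mul_eq_zero_of_sq_mem (u : ZMod 16)
    (h : u ^ 2 ∈ ({0, 4} : Finset (ZMod 16))) : 8 * u = 0 := by
  revert u h; decide

theorem mem_zero_four_of_form_eq_zero :
    ∀ A ∈ ({3, 5, 11, 13} : Finset (ZMod 16)), ∀ s₁ ∈ ({0, 1, 4, 9} : Finset (ZMod 16)),
    ∀ s₂ ∈ ({0, 1, 4, 9} : Finset (ZMod 16)), ∀ s₃ ∈ ({0, 1, 4, 9} : Finset (ZMod 16)),
    ∀ s₄ ∈ ({0, 1, 4, 9} : Finset (ZMod 16)), s₁ - A * s₂ - 2 * s₃ + A * 2 * s₄ = 0 →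
      s₁ ∈ ({0, 4} : Finset (ZMod 16)) ∧ s₂ ∈ ({0, 4} : Finset (ZMod 16)) ∧
      s₃ ∈ ({0, 4} : Finset (ZMod 16)) ∧ s₄ ∈ ({0, 4} : Finset (ZMod 16)) := by
  decide

theorem eight_mul_eq_zero_of_form_eq_zero {A t x y z : ZMod 16}
    (hA : A ∈ ({3, 5, 11, 13} : Finset (ZMod 16)))
    (h : t ^ 2 - A * x ^ 2 - 2 * y ^ 2 + A * 2 * z ^ 2 = 0) :
    8 * t = 0 ∧ 8 * x = 0 ∧ 8 * y = 0 ∧ 8 * z = 0 := by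
  obtain ⟨ht, hx, hy, hz⟩ := mem_zero_four_of_form_eq_zero A hA
    _ (sq_mem_zero_one_four_nine t) _ (sq_mem_zero_one_four_nine x)
    _ (sq_mem_zero_one_four_nine y) _ (sq_mem_zero_one_four_nine z) h
  exact ⟨eight_mul_eq_zero_of_sq_mem t ht, eight_mul_eq_zero_of_sq_mem x hx,
    eight_mul_eq_zero_of_sq_mem y hy, eight_mul_eq_zero_of_sq_mem z hz⟩

end ZMod

namespace PadicInt

theorem isSquare_intCast_of_emod_eight_eq_one {n : ℤ} (hn : n % 8 = 1) :
    IsSquare (n : ℤ_[2]) := by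
  set f : ℤ_[2][X] := X ^ 2 - C (n : ℤ_[2])
  have hf : f.eval 1 = ((1 - n : ℤ) : ℤ_[2]) := by simp [f]
  have hf' : f.derivative.eval 1 = 2 := by simp [f, one_add_one_eq_two]
  have hnorm : ‖f.eval 1‖ < ‖f.derivative.eval 1‖ ^ 2 := by
    have h8 : ‖((1 - n : ℤ) : ℤ_[2])‖ ≤ (2 : ℕ) ^ (-(3 : ℕ) : ℤ) :=
      norm_int_le_pow_iff_dvd.2 (by norm_num; omega)
    rw [hf, hf', show ‖(2 : ℤ_[2])‖ = 2⁻¹ by simpa using norm_p (p := 2)]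
    exact h8.trans_lt (by norm_num)
  obtain ⟨s, hs, -⟩ := hensels_lemma hnorm
  simp only [f, coe_aeval_eq_eval, eval_sub, eval_pow, eval_X, eval_C, sub_eq_zero] at hs
  exact ⟨s, by rw [← hs, sq]⟩

theorem two_dvd_of_eight_mul_toZModPow_eq_zero {T : ℤ_[2]} (h : 8 * toZModPow 4 T = 0) :
    2 ∣ T := by
  have h8T : 8 * T ∈ RingHom.ker (toZModPow (p := 2) 4) := by
    rwa [RingHom.mem_ker, map_mul, map_ofNat]
  obtain ⟨r, hr⟩ := Ideal.mem_span_singleton.1 (ker_toZModPow (p := 2) 4 ▸ h8T)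
  refine ⟨r, mul_left_cancel₀ (by norm_num : (8 : ℤ_[2]) ≠ 0) ?_⟩
  linear_combination hr

theorem two_dvd_of_form_eq_zero {a : ℤ} (ha : a % 8 = 3 ∨ a % 8 = 5) {T X Y Z : ℤ_[2]}
    (h : T ^ 2 - a * X ^ 2 - 2 * Y ^ 2 + a * 2 * Z ^ 2 = 0) :
    2 ∣ T ∧ 2 ∣ X ∧ 2 ∣ Y ∧ 2 ∣ Z := by
  have hA : (a : ZMod 16) ∈ ({3, 5, 11, 13} : Finset (ZMod 16)) := by
    have h16 : a % 16 = 3 ∨ a % 16 = 5 ∨ a % 16 = 11 ∨ a % 16 = 13 := by omega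
    rw [← ZMod.intCast_mod a 16]
    rcases h16 with h | h | h | h <;> simp only [Nat.cast_ofNat, h] <;> decide
  have h16 := congrArg (toZModPow (p := 2) 4) h
  simp only [map_add, map_sub, map_mul, map_pow, map_intCast, map_ofNat, map_zero] at h16
  obtain ⟨ht, hx, hy, hz⟩ := ZMod.eight_mul_eq_zero_of_form_eq_zero hA h16
  exact ⟨two_dvd_of_eight_mul_toZModPow_eq_zero ht, two_dvd_of_eight_mul_toZModPow_eq_zero hx,
    two_dvd_of_eight_mul_toZModPow_eq_zero hy, two_dvd_of_eight_mul_toZModPow_eq_zero hz⟩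

end PadicInt

namespace Padic

theorem eq_zero_of_form_eq_zero {a : ℤ} (ha : a % 8 = 3 ∨ a % 8 = 5) {t x y z : ℚ_[2]}
    (h : t ^ 2 - a * x ^ 2 - 2 * y ^ 2 + a * 2 * z ^ 2 = 0) :
    t = 0 ∧ x = 0 ∧ y = 0 ∧ z = 0 := by
  by_contra hne
  have hv : ![t, x, y, z] ≠ 0 := by
    contrapose! hne
    simpa [funext_iff, Fin.forall_fin_succ] using hne
  obtain ⟨c, hle, i, hi⟩ := exists_norm_mul_le_one_and_eq_one hv
  let T : ℤ_[2] := ⟨c * t, hle 0⟩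
  let X : ℤ_[2] := ⟨c * x, hle 1⟩
  let Y : ℤ_[2] := ⟨c * y, hle 2⟩
  let Z : ℤ_[2] := ⟨c * z, hle 3⟩
  have hform : T ^ 2 - a * X ^ 2 - 2 * Y ^ 2 + a * 2 * Z ^ 2 = 0 := by
    apply Subtype.coe_injective
    simp only [PadicInt.coe_sub, PadicInt.coe_add, PadicInt.coe_mul, PadicInt.coe_pow,
      PadicInt.coe_intCast, PadicInt.coe_zero, show ((2 : ℤ_[2]) : ℚ_[2]) = 2 from rfl]
    linear_combination c ^ 2 * h
  obtain ⟨hT, hX, hY, hZ⟩ := PadicInt.two_dvd_of_form_eq_zero ha hform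
  fin_cases i
  exacts [((PadicInt.norm_lt_one_iff_dvd T).2 hT).ne hi,
    ((PadicInt.norm_lt_one_iff_dvd X).2 hX).ne hi,
    ((PadicInt.norm_lt_one_iff_dvd Y).2 hY).ne hi,
    ((PadicInt.norm_lt_one_iff_dvd Z).2 hZ).ne hi]

theorem exists_form_eq_zero_of_emod_eight {a : ℤ} (ha : a % 8 = 1 ∨ a % 8 = 7) :
    ∃ t x y z : ℚ_[2], t ^ 2 - a * x ^ 2 - 2 * y ^ 2 + a * 2 * z ^ 2 = 0 ∧ x ≠ 0 := by
  rcases ha with ha | ha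
  · obtain ⟨s, hs⟩ := PadicInt.isSquare_intCast_of_emod_eight_eq_one ha
    have hs' : (s : ℚ_[2]) * s = a := by exact_mod_cast congrArg ((↑) : ℤ_[2] → ℚ_[2]) hs.symm
    exact ⟨s, 1, 0, 0, by linear_combination hs', one_ne_zero⟩
  · obtain ⟨s, hs⟩ := PadicInt.isSquare_intCast_of_emod_eight_eq_one (n := a + 2) (by omega)
    have hs' : (s : ℚ_[2]) * s = a + 2 := by
      exact_mod_cast congrArg ((↑) : ℤ_[2] → ℚ_[2]) hs.symm
    exact ⟨s, 1, 1, 0, by linear_combination hs', one_ne_zero⟩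

end Padic

theorem quaternionAlgebra_two_adic_a_two_isDivisionRing_iff_general
    (a : ℤ) (hodd : Odd a) :
    (∀ x : ℍ[ℚ_[2], (a : ℚ_[2]), (2 : ℚ_[2])], x ≠ 0 → IsUnit x) ↔
      (a % 8 = 3 ∨ a % 8 = 5) := by
  rw [QuaternionAlgebra.forall_ne_zero_isUnit_iff]
  refine ⟨fun h ↦ ?_, fun ha t x y z ↦ Padic.eq_zero_of_form_eq_zero ha⟩
  by_contra hne
  have ha2 : a % 2 = 1 := Int.odd_iff.1 hodd
  obtain ⟨t, x, y, z, hq, hx⟩ := Padic.exists_form_eq_zero_of_emod_eight (a := a) (by omega)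
  exact hx (h t x y z hq).2.1

/-- For an odd squarefree integer `a`, the quaternion algebra `ℍ[ℚ₂, a, 2]` is a
division ring iff `a ≡ 3` or `a ≡ 5 (mod 8)`. -/
theorem quaternionAlgebra_two_adic_a_two_isDivisionRing_iff
    (a : ℤ) (hodd : Odd a) (hsa : Squarefree a) :
    (∀ x : ℍ[ℚ_[2], (a : ℚ_[2]), (2 : ℚ_[2])], x ≠ 0 → IsUnit x) ↔
      (a % 8 = 3 ∨ a % 8 = 5) :=
  quaternionAlgebra_two_adic_a_two_isDivisionRing_iff_general a hodd
end

section
/- Let a and b be odd prime numbers (viewed as integers). Then the quaternion algebra ℍ[ℚ₂, a, b] over the 2-adic numbers is a division ring (every nonzero element is invertible) if and only if a ≡ 3 (mod 4) and b ≡ 3 (mod 4). (Equivalently, the Hilbert symbol over ℚ₂ satisfies (a,b) = (−1)^{((a−1)/2)·((b−1)/2)}.) -/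
open Quaternion QuadraticMap Polynomial

/-!
An element of `ℍ[F, a, b]` is invertible exactly when its reduced norm
`x₀² - a x₁² - b x₂² + ab x₃²` is nonzero, so the algebra is a division ring iff this
diagonal form is anisotropic. If `a ≡ 1 (mod 4)`, then `a` or `a + 4b` is `≡ 1 (mod 8)`, hence
a square in `ℚ₂` by Hensel's lemma, which yields an isotropic vector (symmetrically for `b`).
If `a ≡ b ≡ 3 (mod 4)`, a nonzero zero can be scaled to a `2`-adic integral vector with a
coordinate equal to `1`, and the form has no such zero modulo `8`.
-/

namespace QuaternionAlgebra

variable {R : Type*} [CommRing R]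

theorem isUnit_iff_isUnit_re_mul_star {c₁ c₂ c₃ : R} (x : ℍ[R, c₁, c₂, c₃]) :
    IsUnit x ↔ IsUnit (x * star x).re := by
  constructor
  · intro hx
    obtain ⟨y, hy⟩ := (hx.mul hx.star).exists_right_inv
    rw [mul_star_eq_coe, coe_mul_eq_smul] at hy
    exact .of_mul_eq_one y.re (by simpa using congrArg re hy)
  · rintro ⟨n, hn⟩
    refine isUnit_iff_exists.mpr ⟨↑(↑n⁻¹ : R) * star x, ?_, ?_⟩
    · rw [← mul_assoc, ← coe_commutes, mul_assoc, mul_star_eq_coe, ← hn, ← coe_mul,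
        Units.inv_mul, coe_one]
    · rw [mul_assoc, star_comm_self', mul_star_eq_coe, ← hn, ← coe_mul, Units.inv_mul, coe_one]

theorem re_mul_star_eq_weightedSumSquares (c₁ c₂ : R) (x : ℍ[R, c₁, c₂]) :
    (x * star x).re = weightedSumSquares R ![1, -c₁, -c₂, c₁ * c₂] (equivTuple c₁ 0 c₂ x) := by
  simp [Fin.sum_univ_four]
  ring

theorem forall_ne_zero_isUnit_iff_anisotropic {F : Type*} [Field F] (c₁ c₂ : F) :
    (∀ x : ℍ[F, c₁, c₂], x ≠ 0 → IsUnit x) ↔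
      (weightedSumSquares F ![1, -c₁, -c₂, c₁ * c₂]).Anisotropic := by
  rw [Anisotropic, ← (linearEquivTuple c₁ 0 c₂).toEquiv.forall_congr_right]
  refine forall_congr' fun x => ?_
  rw [LinearEquiv.coe_toEquiv, LinearEquiv.map_eq_zero_iff, coe_linearEquivTuple,
    ← re_mul_star_eq_weightedSumSquares, isUnit_iff_isUnit_re_mul_star, isUnit_iff_ne_zero]
  exact not_imp_not

end QuaternionAlgebra

namespace Padic

variable {p : ℕ} [Fact p.Prime]

theorem exists_primitive_of_ne_zero {ι : Type*} [Finite ι] {c : ι → ℚ_[p]} (hc : c ≠ 0) :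
    ∃ (t : ℚ_[p]) (e : ι → ℤ_[p]) (j : ι), (∀ i, (e i : ℚ_[p]) = t * c i) ∧ e j = 1 := by
  obtain ⟨i₀, hi₀⟩ := Function.ne_iff.mp hc
  have : Nonempty ι := ⟨i₀⟩
  obtain ⟨j, hj⟩ := Finite.exists_max fun i => ‖c i‖
  have hcj : c j ≠ 0 := norm_pos_iff.mp ((norm_pos_iff.mpr hi₀).trans_le (hj i₀))
  refine ⟨(c j)⁻¹, fun i => ⟨(c j)⁻¹ * c i, ?_⟩, j, fun i => rfl, ?_⟩
  · rw [norm_mul, norm_inv]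
    exact inv_mul_le_one_of_le₀ (hj i) (norm_nonneg _)
  · exact Subtype.ext (inv_mul_cancel₀ hcj)

theorem anisotropic_weightedSumSquares_of_zmodPow {ι : Type*} [Fintype ι] (w : ι → ℤ) (k : ℕ)
    (h : ∀ v : ι → ZMod (p ^ k), (∃ i, v i = 1) →
      weightedSumSquares (ZMod (p ^ k)) (fun i => (w i : ZMod (p ^ k))) v ≠ 0) :
    (weightedSumSquares ℚ_[p] (fun i => (w i : ℚ_[p]))).Anisotropic := by
  intro c hc
  by_contra hc0
  obtain ⟨t, e, j, hte, hej⟩ := exists_primitive_of_ne_zero hc0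
  have he : weightedSumSquares ℤ_[p] (fun i => (w i : ℤ_[p])) e = 0 := by
    have : ((weightedSumSquares ℤ_[p] (fun i => (w i : ℤ_[p])) e : ℤ_[p]) : ℚ_[p]) =
        weightedSumSquares ℚ_[p] (fun i => (w i : ℚ_[p])) (t • c) := by
      simp [hte]
    rwa [QuadraticMap.map_smul, hc, smul_zero, PadicInt.coe_eq_zero] at this
  refine h (fun i => PadicInt.toZModPow k (e i)) ⟨j, by simp [hej]⟩ ?_
  simpa using congrArg (PadicInt.toZModPow k) he

end Padic

theorem PadicInt.exists_sq_eq_of_modEq_one {u : ℤ} (hu : u ≡ 1 [ZMOD 8]) :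
    ∃ s : ℤ_[2], s ^ 2 = u := by
  have hnorm : ‖aeval (1 : ℤ_[2]) (X ^ 2 - C u)‖ <
      ‖aeval (1 : ℤ_[2]) (derivative (X ^ 2 - C u))‖ ^ 2 := by
    have h8 : ‖((1 - u : ℤ) : ℤ_[2])‖ ≤ ((2 : ℕ) : ℝ) ^ (-(3 : ℕ) : ℤ) :=
      PadicInt.norm_int_le_pow_iff_dvd.mpr (by simpa using hu.dvd)
    have h2 : ‖(2 : ℤ_[2])‖ = 2⁻¹ := by simpa using PadicInt.norm_p (p := 2)
    have hF : aeval (1 : ℤ_[2]) (X ^ 2 - C u) = ((1 - u : ℤ) : ℤ_[2]) := by simp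
    have hF' : aeval (1 : ℤ_[2]) (derivative (X ^ 2 - C u)) = 2 := by simp [map_ofNat]
    rw [hF, hF', h2]
    calc _ ≤ ((2 : ℕ) : ℝ) ^ (-(3 : ℕ) : ℤ) := h8
      _ < 2⁻¹ ^ 2 := by norm_num
  obtain ⟨s, hs, -⟩ := hensels_lemma hnorm
  exact ⟨s, by simpa [sub_eq_zero] using hs⟩

theorem Int.exists_add_mul_sq_modEq_one {A B : ℤ} (hA : A % 4 = 1) (hB : Odd B) :
    ∃ z : ℤ, A + B * z ^ 2 ≡ 1 [ZMOD 8] := by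
  obtain ⟨k, rfl⟩ := hB
  rcases (by omega : A % 8 = 1 ∨ A % 8 = 5) with h | h
  · exact ⟨0, by simp [Int.ModEq, h]⟩
  · exact ⟨2, by norm_num [Int.ModEq]; omega⟩

theorem Int.exists_mul_sq_add_mul_sq_modEq_one {A B : ℤ} (hA : Odd A) (hB : Odd B)
    (h : A % 4 = 1 ∨ B % 4 = 1) :
    ∃ y z : ℤ, (y ≠ 0 ∨ z ≠ 0) ∧ A * y ^ 2 + B * z ^ 2 ≡ 1 [ZMOD 8] := by
  rcases h with hA4 | hB4
  · obtain ⟨z, hz⟩ := exists_add_mul_sq_modEq_one hA4 hB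
    exact ⟨1, z, .inl one_ne_zero, by simpa using hz⟩
  · obtain ⟨y, hy⟩ := exists_add_mul_sq_modEq_one hB4 hA
    exact ⟨y, 1, .inr one_ne_zero, by simpa [add_comm] using hy⟩

theorem Padic.not_anisotropic_of_mul_sq_add_mul_sq_modEq_one {A B y z : ℤ} (hyz : y ≠ 0 ∨ z ≠ 0)
    (h : A * y ^ 2 + B * z ^ 2 ≡ 1 [ZMOD 8]) :
    ¬(weightedSumSquares ℚ_[2] ![1, -(A : ℚ_[2]), -(B : ℚ_[2]), A * B]).Anisotropic := by
  obtain ⟨s, hs⟩ := PadicInt.exists_sq_eq_of_modEq_one h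
  have hs' : (s : ℚ_[2]) ^ 2 = A * y ^ 2 + B * z ^ 2 := by
    exact_mod_cast congrArg ((↑) : ℤ_[2] → ℚ_[2]) hs
  rw [not_anisotropic_iff_exists]
  refine ⟨![s, y, z, 0], fun h0 => ?_, ?_⟩
  · rcases hyz with hy | hz
    · exact hy (by simpa using congrFun h0 1)
    · exact hz (by simpa using congrFun h0 2)
  · simp [Fin.sum_univ_four]
    linear_combination hs'

theorem ZMod.intCast_eq_three_or_seven_of_emod_four_eq_three {A : ℤ} (hA : A % 4 = 3) :
    (A : ZMod 8) = 3 ∨ (A : ZMod 8) = 7 := by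
  rw [← ZMod.intCast_mod A 8]
  rcases (by omega : A % 8 = 3 ∨ A % 8 = 7) with h | h <;> simp [h]

theorem weightedSumSquares_zmod_eight_ne_zero {A B : ZMod 8} (hA : A = 3 ∨ A = 7)
    (hB : B = 3 ∨ B = 7) (v : Fin 4 → ZMod 8) (hv : ∃ i, v i = 1) :
    weightedSumSquares (ZMod 8) ![1, -A, -B, A * B] v ≠ 0 := by
  -- A zero with a coordinate `1` has all coordinates odd (reduce mod 4), and then its value is
  -- `(1 - A)(1 - B) ≡ 4 (mod 8)`.
  have key : ∀ x y z w : ZMod 8, (x = 1 ∨ y = 1 ∨ z = 1 ∨ w = 1) →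
      x * x - A * (y * y) - B * (z * z) + A * B * (w * w) ≠ 0 := by
    rcases hA with rfl | rfl <;> rcases hB with rfl | rfl <;> decide
  simp only [Fin.exists_fin_succ, Fin.exists_fin_zero] at hv
  convert key (v 0) (v 1) (v 2) (v 3) (by simpa using hv) using 1
  simp [Fin.sum_univ_four]
  ring

/-- For odd prime numbers `a, b` (viewed as integers), the quaternion algebra
`ℍ[ℚ₂, a, b]` is a division ring iff `a ≡ 3 (mod 4)` and `b ≡ 3 (mod 4)`. -/
theorem quaternionAlgebra_two_adic_odd_primes_isDivisionRing_iff
    (a b : ℕ) (hpa : a.Prime) (hpb : b.Prime) (hoa : a ≠ 2) (hob : b ≠ 2) :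
    (∀ x : ℍ[ℚ_[2], ((a : ℤ) : ℚ_[2]), ((b : ℤ) : ℚ_[2])], x ≠ 0 → IsUnit x) ↔
      (a % 4 = 3 ∧ b % 4 = 3) := by
  have ha : Odd (a : ℤ) := by exact_mod_cast hpa.odd_of_ne_two hoa
  have hb : Odd (b : ℤ) := by exact_mod_cast hpb.odd_of_ne_two hob
  have hw (R : Type) [Ring R] : (fun i => ((![1, -(a : ℤ), -(b : ℤ), a * b] i : ℤ) : R)) =
      ![1, -((a : ℤ) : R), -((b : ℤ) : R), (a : ℤ) * (b : ℤ)] := by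
    ext i
    fin_cases i <;> simp
  rw [QuaternionAlgebra.forall_ne_zero_isUnit_iff_anisotropic]
  constructor
  · intro hQ
    by_contra h_not_three
    have h_one : (a : ℤ) % 4 = 1 ∨ (b : ℤ) % 4 = 1 := by
      rw [Int.odd_iff] at ha hb
      omega
    obtain ⟨y, z, hyz, hmod⟩ := Int.exists_mul_sq_add_mul_sq_modEq_one ha hb h_one
    exact Padic.not_anisotropic_of_mul_sq_add_mul_sq_modEq_one hyz hmod hQ
  · rintro ⟨ha4, hb4⟩
    rw [← hw]
    refine Padic.anisotropic_weightedSumSquares_of_zmodPow _ 3 fun v hv => ?_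
    rw [hw]
    exact weightedSumSquares_zmod_eight_ne_zero
      (ZMod.intCast_eq_three_or_seven_of_emod_four_eq_three (by omega))
      (ZMod.intCast_eq_three_or_seven_of_emod_four_eq_three (by omega)) v hv
end

section
/- Let p and q be primes with p ≡ 3 (mod 4), q ≡ 1 (mod 8), and q a square modulo p (Legendre symbol (q|p) = 1). Then the quaternion algebra ℍ[ℚ, −p, −q] is the definite quaternion algebra of discriminant p: for every prime ℓ, the localization ℍ[ℚ_ℓ, −p, −q] is a division ring if and only if ℓ = p, and ℍ[ℝ, −p, −q] is a division ring. -/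
/-!
The norm form of `ℍ[F, -p, -q]` is `x₀² + p x₁² + q x₂² + pq x₃²`, and the algebra is a division
ring exactly when this form is anisotropic. Over `ℝ` it is positive definite. Over `ℚ_p` write it
as `(x₀² + q x₂²) + p (x₁² + q x₃²)`: since `q` is a square and `-1` a non-square mod `p`, `-q` is
a non-square mod `p`, so `‖u² + q v²‖ = max ‖u‖ ‖v‖ ^ 2` has even valuation and the two halves can
never cancel. At every other prime `ℓ` the ternary subform `x² + p y² + q z²` already has a
nontrivial zero: at `ℓ = 2` because `q` and one of `-p`, `-p - 4` are `1 mod 8`, at `ℓ = q`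
because `-p` is a square mod `q` by quadratic reciprocity, and at the remaining odd `ℓ` because
`x² = -(p y² + q)` is solvable in `ℤ/ℓ` by counting squares; in each case Hensel's lemma lifts a
square root from `ℤ/ℓ` to `ℚ_ℓ`.
-/

open Quaternion Polynomial

namespace QuaternionAlgebra

variable {F : Type*} [Field F] {a b : F}

def normForm (x : ℍ[F, a, b]) : F :=
  x.re ^ 2 - a * x.imI ^ 2 - b * x.imJ ^ 2 + a * b * x.imK ^ 2

theorem mul_star_eq_coe_normForm (x : ℍ[F, a, b]) : x * star x = ↑(normForm x) := by
  rw [mul_star_eq_coe]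
  congr 1
  simp only [normForm, re_mul, re_star, imI_star, imJ_star, imK_star]
  ring

theorem isUnit_iff_normForm_ne_zero (x : ℍ[F, a, b]) : IsUnit x ↔ normForm x ≠ 0 := by
  constructor
  · rintro hx h
    have hmul : x * star x = 0 := by rw [mul_star_eq_coe_normForm, h, coe_zero]
    exact hx.ne_zero (star_eq_zero.1 (hx.mul_right_eq_zero.1 hmul))
  · intro h
    refine ⟨⟨x, (normForm x)⁻¹ • star x, ?_, ?_⟩, rfl⟩
    · rw [mul_smul_comm, mul_star_eq_coe_normForm, ← coe_mul_eq_smul, ← coe_mul,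
        inv_mul_cancel₀ h, coe_one]
    · rw [smul_mul_assoc, star_comm_self', mul_star_eq_coe_normForm, ← coe_mul_eq_smul,
        ← coe_mul, inv_mul_cancel₀ h, coe_one]

theorem forall_ne_zero_isUnit_iff_s3 :
    (∀ x : ℍ[F, a, b], x ≠ 0 → IsUnit x) ↔ ∀ x : ℍ[F, a, b], normForm x = 0 → x = 0 := by
  simp only [isUnit_iff_normForm_ne_zero, not_imp_not]

theorem eq_zero_of_normForm_eq_zero_of_neg [LinearOrder F] [IsStrictOrderedRing F] (ha : a < 0)
    (hb : b < 0) {x : ℍ[F, a, b]} (hx : normForm x = 0) : x = 0 := by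
  have hI : 0 ≤ -a * x.imI ^ 2 := mul_nonneg (neg_nonneg.2 ha.le) (sq_nonneg _)
  have hJ : 0 ≤ -b * x.imJ ^ 2 := mul_nonneg (neg_nonneg.2 hb.le) (sq_nonneg _)
  have hK : 0 ≤ a * b * x.imK ^ 2 :=
    mul_nonneg (mul_nonneg_of_nonpos_of_nonpos ha.le hb.le) (sq_nonneg _)
  have hsum : x.re ^ 2 + -a * x.imI ^ 2 + -b * x.imJ ^ 2 + a * b * x.imK ^ 2 = 0 := by
    simp only [normForm] at hx; linear_combination hx
  rw [add_eq_zero_iff_of_nonneg (by positivity) hK, add_eq_zero_iff_of_nonneg (by positivity) hJ,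
    add_eq_zero_iff_of_nonneg (sq_nonneg _) hI] at hsum
  obtain ⟨⟨⟨hre, himI⟩, himJ⟩, himK⟩ := hsum
  ext <;> simp_all [ha.ne, hb.ne]

end QuaternionAlgebra

theorem not_isSquare_neg_of_isSquare {K : Type*} [Field K] {c : K} (hc0 : c ≠ 0)
    (hc : IsSquare c) (h : ¬IsSquare (-1 : K)) : ¬IsSquare (-c) :=
  fun hn => h (by simpa [neg_div, hc0] using hn.div hc)

section TernaryIsotropic

variable {K : Type*} [Field K]

def TernaryIsotropic (a b : K) : Prop :=
  ∃ x y z : K, (x, y, z) ≠ 0 ∧ x ^ 2 + a * y ^ 2 + b * z ^ 2 = 0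

namespace TernaryIsotropic

variable {a b : K}

theorem of_isSquare_neg (b : K) (h : IsSquare (-a)) : TernaryIsotropic a b := by
  obtain ⟨s, hs⟩ := h
  exact ⟨s, 1, 0, by simp, by linear_combination -hs⟩

theorem of_isSquare_neg_mul_sq_add (y : K) (h : IsSquare (-(a * y ^ 2 + b))) :
    TernaryIsotropic a b := by
  obtain ⟨s, hs⟩ := h
  exact ⟨s, y, 1, by simp, by linear_combination -hs⟩

theorem of_isSquare_neg_mul (ha : a ≠ 0) (h : IsSquare (-(a * b))) : TernaryIsotropic a b := by
  obtain ⟨s, hs⟩ := h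
  exact ⟨0, s, a, by simp [ha], by linear_combination -a * hs⟩

open QuaternionAlgebra in
theorem exists_normForm_eq_zero (h : TernaryIsotropic a b) :
    ∃ x : ℍ[K, -a, -b], x ≠ 0 ∧ normForm x = 0 := by
  obtain ⟨x, y, z, hne, hxyz⟩ := h
  refine ⟨⟨x, y, z, 0⟩, fun h => hne ?_, by simp only [normForm]; linear_combination hxyz⟩
  rw [QuaternionAlgebra.ext_iff] at h
  obtain ⟨rfl, rfl, rfl, -⟩ := h
  rfl

end TernaryIsotropic

end TernaryIsotropic

namespace PadicInt

variable {ℓ : ℕ} [Fact ℓ.Prime]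

theorem norm_lt_one_iff_toZMod_eq_zero (x : ℤ_[ℓ]) : ‖x‖ < 1 ↔ toZMod x = 0 := by
  rw [← RingHom.mem_ker, ker_toZMod, IsLocalRing.mem_maximalIdeal, mem_nonunits]

theorem isSquare_of_norm_sq_sub_lt {z : ℤ_[ℓ]} (a : ℤ_[ℓ]) (h : ‖a ^ 2 - z‖ < ‖2 * a‖ ^ 2) :
    IsSquare z := by
  have hF : (X ^ 2 - C z).aeval a = a ^ 2 - z := by simp
  have hF' : (X ^ 2 - C z).derivative.aeval a = 2 * a := by
    simp only [derivative_sub, derivative_X_pow, derivative_C, sub_zero, map_mul, aeval_X_pow,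
      map_natCast]
    norm_num
  obtain ⟨t, ht, -⟩ := hensels_lemma (F := X ^ 2 - C z) (a := a) (by rwa [hF, hF'])
  exact ⟨t, by simpa [sub_eq_zero, sq, eq_comm] using ht⟩

theorem isSquare_of_isSquare_toZMod_s3 (hℓ : ℓ ≠ 2) {z : ℤ_[ℓ]} (hz0 : toZMod z ≠ 0)
    (hz : IsSquare (toZMod z)) : IsSquare z := by
  obtain ⟨s, hs⟩ := hz
  obtain ⟨a, rfl⟩ := ZMod.ringHom_surjective toZMod s
  have h2 : (2 : ZMod ℓ) ≠ 0 := Ring.two_ne_zero (by rwa [ZMod.ringChar_zmod_n])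
  refine isSquare_of_norm_sq_sub_lt a ?_
  rw [(norm_le_one (2 * a)).antisymm, one_pow, norm_lt_one_iff_toZMod_eq_zero]
  · simp [hs, sq]
  · rw [← not_lt, norm_lt_one_iff_toZMod_eq_zero, map_mul, map_ofNat]
    exact mul_ne_zero h2 fun h => hz0 (by rw [hs, h, mul_zero])

theorem isSquare_intCast_of_emod_eight_eq_one_s3 {z : ℤ} (h : z % 8 = 1) :
    IsSquare (z : ℤ_[2]) := by
  refine isSquare_of_norm_sq_sub_lt 1 ?_
  have h8 : ‖((1 - z : ℤ) : ℤ_[2])‖ ≤ (2 : ℝ) ^ (-(3 : ℕ) : ℤ) :=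
    norm_int_le_pow_iff_dvd.2 (by push_cast; omega)
  have h2 : ‖(2 : ℤ_[2])‖ = 2⁻¹ := by exact_mod_cast norm_p (p := 2)
  push_cast at h8
  rw [mul_one, one_pow, h2]
  norm_num at h8 ⊢
  linarith

theorem norm_sq_add_eq_one {c : ℤ_[ℓ]} (hc : ¬IsSquare (-toZMod c)) (w : ℤ_[ℓ]) :
    ‖w ^ 2 + c‖ = 1 := by
  refine (norm_le_one _).antisymm (not_lt.1 fun h => hc ⟨toZMod w, ?_⟩)
  rw [norm_lt_one_iff_toZMod_eq_zero, map_add, map_pow] at h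
  linear_combination -h

end PadicInt

namespace Padic

variable {ℓ : ℕ} [Fact ℓ.Prime]

theorem isSquare_intCast_of_isSquare_zmod (hℓ : ℓ ≠ 2) {z : ℤ} (hz0 : (z : ZMod ℓ) ≠ 0)
    (hz : IsSquare (z : ZMod ℓ)) : IsSquare (z : ℚ_[ℓ]) := by
  have : IsSquare (z : ℤ_[ℓ]) := PadicInt.isSquare_of_isSquare_toZMod_s3 hℓ (by simpa using hz0)
    (by simpa using hz)
  simpa using this.map PadicInt.Coe.ringHom

theorem isSquare_intCast_of_emod_eight_eq_one_s3 {z : ℤ} (h : z % 8 = 1) : IsSquare (z : ℚ_[2]) := by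
  simpa using (PadicInt.isSquare_intCast_of_emod_eight_eq_one_s3 h).map PadicInt.Coe.ringHom

theorem ternaryIsotropic_two {a b : ℤ} (ha : a % 4 = 3) (hb : b % 8 = 1) :
    TernaryIsotropic (a : ℚ_[2]) (b : ℚ_[2]) := by
  rcases (by omega : a % 8 = 7 ∨ a % 8 = 3) with ha8 | ha8
  · exact .of_isSquare_neg _
      (by exact_mod_cast isSquare_intCast_of_emod_eight_eq_one_s3 (z := -a) (by omega))
  · obtain ⟨s, hs⟩ := isSquare_intCast_of_emod_eight_eq_one_s3 hb
    obtain ⟨t, ht⟩ := isSquare_intCast_of_emod_eight_eq_one_s3 (z := -a - 4) (by omega)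
    push_cast at ht
    exact ⟨t * s, s, 2, by simp, by linear_combination -s ^ 2 * ht + 4 * hs⟩

theorem ternaryIsotropic_of_ne_zero (hℓ : ℓ ≠ 2) {a b : ℤ} (ha : (a : ZMod ℓ) ≠ 0)
    (hb : (b : ZMod ℓ) ≠ 0) : TernaryIsotropic (a : ℚ_[ℓ]) (b : ℚ_[ℓ]) := by
  have hodd : Fintype.card (ZMod ℓ) % 2 = 1 := by
    rw [ZMod.card]; exact Nat.odd_iff.1 ((Fact.out : ℓ.Prime).odd_of_ne_two hℓ)
  obtain ⟨x, y, hxy⟩ := FiniteField.exists_root_sum_quadratic (f := X ^ 2)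
    (g := C (a : ZMod ℓ) * X ^ 2 + C 0 * X + C (b : ZMod ℓ)) (degree_X_pow 2)
    (degree_quadratic ha) hodd
  obtain ⟨y, rfl⟩ := ZMod.intCast_surjective y
  simp only [eval_add, eval_mul, eval_pow, eval_X, eval_C, zero_mul, add_zero] at hxy
  rcases eq_or_ne x 0 with rfl | hx
  · refine .of_isSquare_neg_mul (Int.cast_ne_zero.2 (by rintro rfl; simp at ha)) ?_
    have := isSquare_intCast_of_isSquare_zmod hℓ (z := -(a * b)) ?_ ⟨a * y, ?_⟩
    · exact_mod_cast this
    · push_cast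
      exact neg_ne_zero.2 (mul_ne_zero ha hb)
    · push_cast; linear_combination -a * hxy
  · refine .of_isSquare_neg_mul_sq_add (y : ℚ_[ℓ]) ?_
    have := isSquare_intCast_of_isSquare_zmod hℓ (z := -(a * y ^ 2 + b)) ?_ ⟨x, ?_⟩
    · exact_mod_cast this
    · push_cast
      rw [show -(a * y ^ 2 + b : ZMod ℓ) = x ^ 2 by linear_combination -hxy]
      exact pow_ne_zero 2 hx
    · push_cast; linear_combination -hxy

theorem ternaryIsotropic_of_ne {p q : ℕ} [Fact p.Prime] [Fact q.Prime] (hp4 : p % 4 = 3)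
    (hq8 : q % 8 = 1) (hp : IsSquare (p : ZMod q)) (hℓ : ℓ ≠ p) :
    TernaryIsotropic (p : ℚ_[ℓ]) (q : ℚ_[ℓ]) := by
  by_cases h2 : ℓ = 2
  · subst h2
    exact_mod_cast ternaryIsotropic_two (a := p) (b := q) (by omega) (by omega)
  by_cases hq : ℓ = q
  · subst hq
    refine .of_isSquare_neg _ ?_
    have hsq : IsSquare ((-p : ℤ) : ZMod ℓ) := by
      push_cast
      rw [neg_eq_neg_one_mul]
      exact (ZMod.exists_sq_eq_neg_one_iff.2 (by omega)).mul hp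
    have hp0 : ((-p : ℤ) : ZMod ℓ) ≠ 0 := by
      push_cast
      exact neg_ne_zero.2 (ZMod.prime_ne_zero ℓ p hℓ)
    exact_mod_cast isSquare_intCast_of_isSquare_zmod h2 hp0 hsq
  · exact_mod_cast ternaryIsotropic_of_ne_zero h2 (a := p) (b := q)
      (by exact_mod_cast ZMod.prime_ne_zero ℓ p hℓ) (by exact_mod_cast ZMod.prime_ne_zero ℓ q hq)

end Padic

namespace Padic

variable {p : ℕ} [Fact p.Prime]

theorem norm_sq_add_mul_sq {c : ℤ_[p]} (hc : ¬IsSquare (-PadicInt.toZMod c)) (u v : ℚ_[p]) :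
    ‖u ^ 2 + c * v ^ 2‖ = max ‖u‖ ‖v‖ ^ 2 := by
  rcases lt_or_ge ‖v‖ ‖u‖ with h | h
  · have hlt : ‖(c : ℚ_[p]) * v ^ 2‖ < ‖u ^ 2‖ := by
      rw [norm_mul, norm_pow, norm_pow, ← PadicInt.norm_def]
      exact (mul_le_of_le_one_left (by positivity) (PadicInt.norm_le_one c)).trans_lt (by gcongr)
    rw [add_eq_max_of_ne hlt.ne', max_eq_left hlt.le, max_eq_left h.le, norm_pow]
  · rcases eq_or_ne v 0 with rfl | hv
    · simp_all
    have hle : ‖u / v‖ ≤ 1 := by rw [norm_div]; exact div_le_one_of_le₀ h (norm_nonneg v)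
    obtain ⟨w, hw⟩ : ∃ w : ℤ_[p], (w : ℚ_[p]) = u / v := ⟨⟨u / v, hle⟩, rfl⟩
    have hfac : u ^ 2 + c * v ^ 2 = v ^ 2 * ((w ^ 2 + c : ℤ_[p]) : ℚ_[p]) := by
      push_cast [hw]
      field_simp
    rw [hfac, norm_mul, ← PadicInt.norm_def, PadicInt.norm_sq_add_eq_one hc, mul_one, norm_pow,
      max_eq_right h]

theorem norm_sq_ne_norm_p_mul_sq (a : ℚ_[p]) {b : ℚ_[p]} (hb : b ≠ 0) :
    ‖a ^ 2‖ ≠ ‖(p : ℚ_[p]) * b ^ 2‖ := by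
  have hp : (p : ℚ_[p]) ≠ 0 := Nat.cast_ne_zero.2 (Fact.out : p.Prime).ne_zero
  rcases eq_or_ne a 0 with rfl | ha
  · simp [hb, (Fact.out : p.Prime).ne_zero]
  have hp_pos : (0 : ℝ) < p := mod_cast (Fact.out : p.Prime).pos
  have hp_ne_one : (p : ℝ) ≠ 1 := mod_cast (Fact.out : p.Prime).ne_one
  rw [norm_eq_zpow_neg_valuation (pow_ne_zero 2 ha),
    norm_eq_zpow_neg_valuation (mul_ne_zero hp (pow_ne_zero 2 hb)), Ne,
    zpow_right_inj₀ hp_pos hp_ne_one, valuation_mul hp (pow_ne_zero 2 hb), valuation_p,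
    valuation_pow, valuation_pow]
  omega

end Padic

namespace QuaternionAlgebra

variable {p : ℕ} [Fact p.Prime]

theorem eq_zero_of_normForm_eq_zero_padic {c : ℤ_[p]} (hc : ¬IsSquare (-PadicInt.toZMod c))
    {x : ℍ[ℚ_[p], -(p : ℚ_[p]), -(c : ℚ_[p])]} (hx : normForm x = 0) : x = 0 := by
  set A := x.re ^ 2 + c * x.imJ ^ 2
  set B := x.imI ^ 2 + c * x.imK ^ 2
  have hN : normForm x = A + p * B := by simp only [normForm, A, B]; ring
  have hAB : ‖A‖ = ‖(p : ℚ_[p]) * B‖ := by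
    rw [← norm_neg ((p : ℚ_[p]) * B)]
    congr 1
    linear_combination hx - hN
  have hA := Padic.norm_sq_add_mul_sq hc x.re x.imJ
  have hB := Padic.norm_sq_add_mul_sq hc x.imI x.imK
  have hB0 : max ‖x.imI‖ ‖x.imK‖ = 0 := by
    by_contra hne
    obtain ⟨w₁, hw₁⟩ : ∃ w, max ‖x.re‖ ‖x.imJ‖ = ‖w‖ :=
      (max_choice ‖x.re‖ ‖x.imJ‖).elim (⟨_, ·⟩) (⟨_, ·⟩)
    obtain ⟨w₂, hw₂⟩ : ∃ w, max ‖x.imI‖ ‖x.imK‖ = ‖w‖ :=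
      (max_choice ‖x.imI‖ ‖x.imK‖).elim (⟨_, ·⟩) (⟨_, ·⟩)
    refine Padic.norm_sq_ne_norm_p_mul_sq w₁ (b := w₂) (by rintro rfl; simp_all) ?_
    rw [norm_pow, ← hw₁, ← hA, hAB, norm_mul, norm_mul, hB, hw₂, norm_pow]
  have hA0 : max ‖x.re‖ ‖x.imJ‖ = 0 := by
    rw [hAB, norm_mul, hB, hB0] at hA
    exact pow_eq_zero_iff two_ne_zero |>.1 (by simpa using hA.symm)
  ext <;> simp only [re_zero, imI_zero, imJ_zero, imK_zero] <;> refine norm_le_zero_iff.1 ?_ <;>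
    linarith [le_max_left ‖x.re‖ ‖x.imJ‖, le_max_right ‖x.re‖ ‖x.imJ‖,
      le_max_left ‖x.imI‖ ‖x.imK‖, le_max_right ‖x.imI‖ ‖x.imK‖]

end QuaternionAlgebra

/-- For primes `p ≡ 3 (mod 4)`, `q ≡ 1 (mod 8)` with `q` a square mod `p`, the
quaternion algebra `ℍ[ℚ, -p, -q]` is the definite quaternion algebra of
discriminant `p`: it is division exactly at `ℝ` and at the prime `p`. -/
theorem quaternionAlgebra_neg_p_neg_q_discriminant
    (p q : ℕ) [Fact p.Prime] [Fact q.Prime]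
    (hp4 : p % 4 = 3) (hq8 : q % 8 = 1) (hleg : legendreSym p q = 1) :
    (∀ (ℓ : ℕ) [Fact ℓ.Prime],
      ((∀ x : ℍ[ℚ_[ℓ], (-(p : ℚ_[ℓ])), (-(q : ℚ_[ℓ]))], x ≠ 0 → IsUnit x) ↔ ℓ = p)) ∧
    (∀ x : ℍ[ℝ, (-(p : ℝ)), (-(q : ℝ))], x ≠ 0 → IsUnit x) := by
  have hpq : p ≠ q := by omega
  have hq_sq : IsSquare (q : ZMod p) :=
    (legendreSym.eq_one_iff' p (ZMod.prime_ne_zero p q hpq)).1 hleg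
  have hp_sq : IsSquare (p : ZMod q) :=
    (legendreSym.eq_one_iff' q (ZMod.prime_ne_zero q p hpq.symm)).1
      ((legendreSym.quadratic_reciprocity_one_mod_four (by omega) (by omega)).symm.trans hleg)
  simp only [QuaternionAlgebra.forall_ne_zero_isUnit_iff_s3]
  refine ⟨fun ℓ _ => ⟨fun h => ?_, ?_⟩, ?_⟩
  · by_contra hℓ
    obtain ⟨x, hx0, hx⟩ := (Padic.ternaryIsotropic_of_ne hp4 hq8 hp_sq hℓ).exists_normForm_eq_zero
    exact hx0 (h x hx)
  · rintro rfl
    have hq_nonsq : ¬IsSquare (-PadicInt.toZMod (q : ℤ_[ℓ])) := by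
      simpa using not_isSquare_neg_of_isSquare (ZMod.prime_ne_zero ℓ q hpq) hq_sq
        (by rw [ZMod.exists_sq_eq_neg_one_iff]; omega)
    exact fun x => QuaternionAlgebra.eq_zero_of_normForm_eq_zero_padic hq_nonsq
  · exact fun x => QuaternionAlgebra.eq_zero_of_normForm_eq_zero_of_neg
      (neg_lt_zero.2 (Nat.cast_pos.2 (Fact.out : p.Prime).pos))
      (neg_lt_zero.2 (Nat.cast_pos.2 (Fact.out : q.Prime).pos))
end

section
/- Let p and q be primes with p ≡ 3 (mod 4), q ≡ 1 (mod 8), and (q|p) = 1. Let n ≥ 0 and r = 2n+1. In B = ℍ[ℚ, −p, −q], choose an integer x with x² ≡ −p (mod q), integers v, w with v·q + w·(2x) = 1, and an integer u with 0 ≤ u < 2q and u ≡ v·q + 2·w (mod 2q). Set e₁ = 1, e₂ = (1 + i)/2, e₃ = pⁿ·(j + u·k)/(2q), e₄ = pⁿ·k in B. Then the ℤ-submodule S of B spanned by e₁, e₂, e₃, e₄ satisfies: (i) 1 ∈ S; (ii) S is closed under multiplication; (iii) e₁, e₂, e₃, e₄ are linearly independent over ℚ; and (iv) the 4×4 rational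 matrix M with entries M(s,t) = trd(e_s·e_t) has |det M| = p^{2(2n+1)}. That is, S is an order of level N = p^r = p^{2n+1} in the definite quaternion algebra of discriminant p. -/
open Quaternion

/-!
Write `ω = (1 + i)/2`, `η = pⁿ(j + uk)/(2q)` and `κ = pⁿk`. The multiplication table of
`1, ω, η, κ` has integer entries: they are built from `A = (p + 1)/4`, `B = (1 - up)/2`,
`m = (1 + u²p)/(4q)` and `p²ⁿ`, and `m` is an integer because `xu ≡ 1 (mod q)` turns
`x² ≡ -p` into `q ∣ 1 + u²p`, while `u` odd and `p ≡ 3 (mod 4)` give `4 ∣ 1 + u²p`.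
So the ℤ-span is a ring. The Gram matrix of the reduced trace form is block diagonal with
blocks of determinant `-p` and `p^(4n+1)`, which gives both the level and, as the determinant
is nonzero, the linear independence.
-/

theorem Int.odd_of_modEq_mul_add_two_mul {q x v w u : ℤ} (hvw : v * q + w * (2 * x) = 1)
    (hu : u ≡ v * q + 2 * w [ZMOD 2 * q]) : Odd u := by
  have h2 : u ≡ v * q + 2 * w [ZMOD 2] := Int.ModEq.of_mul_right q hu
  have : Odd (v * q + 2 * w) := ⟨w - w * x, by linear_combination hvw⟩
  exact Int.odd_iff.mpr (Eq.trans h2 (Int.odd_iff.mp this))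

theorem Int.dvd_one_add_sq_mul_of_sq_modEq_neg {q x v w u p : ℤ} (hx : x ^ 2 ≡ -p [ZMOD q])
    (hvw : v * q + w * (2 * x) = 1) (hu : u ≡ v * q + 2 * w [ZMOD 2 * q]) :
    q ∣ 1 + u ^ 2 * p := by
  have hu' : u ≡ 2 * w [ZMOD q] := by
    have := Int.ModEq.of_mul_left 2 hu
    simpa [Int.ModEq, Int.add_mul_emod_self_left] using this
  have hxu : x * u ≡ 1 [ZMOD q] :=
    calc x * u ≡ x * (2 * w) [ZMOD q] := hu'.mul_left x
      _ = 1 - v * q := by linear_combination hvw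
      _ ≡ 1 [ZMOD q] := by simp [Int.ModEq, Int.sub_mul_emod_self_right]
  have : 1 + u ^ 2 * p ≡ 0 [ZMOD q] :=
    calc 1 + u ^ 2 * p ≡ (x * u) ^ 2 + u ^ 2 * p [ZMOD q] := by
          simpa using (hxu.pow 2).symm.add_right (u ^ 2 * p)
      _ = u ^ 2 * (x ^ 2 + p) := by ring
      _ ≡ u ^ 2 * (-p + p) [ZMOD q] := (hx.add_right p).mul_left _
      _ = 0 := by ring
  exact Int.modEq_zero_iff_dvd.mp this

theorem Int.four_dvd_one_add_sq_mul {u p : ℤ} (hu : Odd u) (hp : p % 4 = 3) :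
    4 ∣ 1 + u ^ 2 * p := by
  obtain ⟨k, rfl⟩ := hu
  have h : (4 : ℤ) ∣ p + 1 := by omega
  rw [show 1 + (2 * k + 1) ^ 2 * p = (p + 1) + 4 * ((k ^ 2 + k) * p) by ring]
  exact dvd_add h (dvd_mul_right _ _)

theorem Int.four_mul_dvd_one_add_sq_mul_of_sq_modEq_neg {q x v w u p : ℤ} (hp : p % 4 = 3)
    (hq : Odd q) (hx : x ^ 2 ≡ -p [ZMOD q]) (hvw : v * q + w * (2 * x) = 1)
    (hu : u ≡ v * q + 2 * w [ZMOD 2 * q]) : 4 * q ∣ 1 + u ^ 2 * p := by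
  have hcop : IsCoprime (4 : ℤ) q := by
    simpa using (Int.isCoprime_two_left.mpr hq).pow_left (m := 2)
  exact hcop.mul_dvd (four_dvd_one_add_sq_mul (odd_of_modEq_mul_add_two_mul hvw hu) hp)
    (dvd_one_add_sq_mul_of_sq_modEq_neg hx hvw hu)

theorem Submodule.mul_mem_span_of_mul_mem {R A : Type*} [CommSemiring R] [Semiring A]
    [Algebra R A] {s : Set A} (h : ∀ a ∈ s, ∀ b ∈ s, a * b ∈ span R s) {x y : A}
    (hx : x ∈ span R s) (hy : y ∈ span R s) : x * y ∈ span R s := by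
  have hle : span R s * span R s ≤ span R s := by
    rw [span_mul_span, span_le]
    rintro _ ⟨a, ha, b, hb, rfl⟩
    exact h a ha b hb
  exact hle (mul_mem_mul hx hy)

theorem LinearMap.BilinForm.linearIndependent_of_det_gram_ne_zero {R M ι : Type*} [CommRing R]
    [IsDomain R] [AddCommGroup M] [Module R M] [Fintype ι] [DecidableEq ι]
    (B : LinearMap.BilinForm R M) {v : ι → M}
    (h : (Matrix.of fun s t => B (v s) (v t)).det ≠ 0) :
    LinearIndependent R v := by
  rw [Fintype.linearIndependent_iff]
  intro g hg
  have hmul : (Matrix.of fun s t => B (v s) (v t)).mulVec g = 0 := by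
    ext s
    simpa [Matrix.mulVec, dotProduct, map_sum, mul_comm] using congrArg (B (v s)) hg
  exact congrFun (Matrix.eq_zero_of_mulVec_eq_zero h hmul)

namespace QuaternionAlgebra

def trdForm (R : Type*) [CommRing R] (c₁ c₂ c₃ : R) :
    LinearMap.BilinForm R (QuaternionAlgebra R c₁ c₂ c₃) :=
  LinearMap.mk₂ R (fun x y => (x * y + star (x * y)).re)
    (fun _ _ _ => by simp only [add_mul, star_add, re_add]; ring)
    (fun _ _ _ => by simp only [smul_mul_assoc, star_smul, ← smul_add, re_smul])
    (fun _ _ _ => by simp only [mul_add, star_add, re_add]; ring)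
    (fun _ _ _ => by simp only [mul_smul_comm, star_smul, ← smul_add, re_smul])

end QuaternionAlgebra

namespace OddLevelOrder

variable (p q n : ℕ) (u : ℤ)

def ω : ℍ[ℚ, -(p : ℚ), -(q : ℚ)] := ⟨1 / 2, 1 / 2, 0, 0⟩

def η : ℍ[ℚ, -(p : ℚ), -(q : ℚ)] :=
  ⟨0, 0, (p : ℚ) ^ n / (2 * q), (p : ℚ) ^ n * (u : ℚ) / (2 * q)⟩

def κ : ℍ[ℚ, -(p : ℚ), -(q : ℚ)] := ⟨0, 0, 0, (p : ℚ) ^ n⟩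

def basis : Fin 4 → ℍ[ℚ, -(p : ℚ), -(q : ℚ)] := ![1, ω p q, η p q n u, κ p q n]

variable {p q n u} {A B m : ℤ}

theorem ω_mul_ω (hA : (A : ℚ) = (p + 1) / 4) : ω p q * ω p q = ω p q + (-A) • 1 := by
  ext <;> simp [ω, hA] <;> ring

-- Erasing `Int.cast_pow` and `Int.cast_mul` keeps integer coefficients as casts
-- `((k : ℤ) : ℍ)`, whose components `simp` can read off.
theorem ω_mul_η (hq : (q : ℚ) ≠ 0) (hB : (B : ℚ) = (1 - u * p) / 2)
    (hm : (m : ℚ) = (1 + u ^ 2 * p) / (4 * q)) :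
    ω p q * η p q n u = B • η p q n u + m • κ p q n := by
  ext <;> simp [ω, η, κ, hB, hm, -Int.cast_pow, -Int.cast_mul] <;> field_simp <;> ring

theorem η_mul_ω (hq : (q : ℚ) ≠ 0) (hB : (B : ℚ) = (1 - u * p) / 2)
    (hm : (m : ℚ) = (1 + u ^ 2 * p) / (4 * q)) :
    η p q n u * ω p q = (B + u * p) • η p q n u + (-m) • κ p q n := by
  ext <;> simp [ω, η, κ, hB, hm, -Int.cast_pow, -Int.cast_mul] <;> field_simp <;> ring

theorem ω_mul_κ (hq : (q : ℚ) ≠ 0) (hB : (B : ℚ) = (1 - u * p) / 2) :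
    ω p q * κ p q n = (-(p * q) : ℤ) • η p q n u + (B + u * p) • κ p q n := by
  ext <;> simp [ω, η, κ, hB, -Int.cast_pow, -Int.cast_mul] <;> field_simp
  ring

theorem κ_mul_ω (hq : (q : ℚ) ≠ 0) (hB : (B : ℚ) = (1 - u * p) / 2) :
    κ p q n * ω p q = (p * q : ℤ) • η p q n u + B • κ p q n := by
  ext <;> simp [ω, η, κ, hB, -Int.cast_pow, -Int.cast_mul] <;> field_simp
  ring

theorem η_mul_η (hq : (q : ℚ) ≠ 0) (hm : (m : ℚ) = (1 + u ^ 2 * p) / (4 * q)) :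
    η p q n u * η p q n u = (-p ^ (2 * n) * m : ℤ) • 1 := by
  ext <;> simp [η, hm, -Int.cast_pow, -Int.cast_mul] <;> field_simp <;> ring

theorem η_mul_κ (hq : (q : ℚ) ≠ 0) (hB : (B : ℚ) = (1 - u * p) / 2) :
    η p q n u * κ p q n =
      (p ^ (2 * n) : ℤ) • ω p q + (-p ^ (2 * n) * (B + u * p) : ℤ) • 1 := by
  ext <;> simp [ω, η, κ, hB, -Int.cast_pow, -Int.cast_mul] <;> field_simp <;> ring

theorem κ_mul_η (hq : (q : ℚ) ≠ 0) (hB : (B : ℚ) = (1 - u * p) / 2) :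
    κ p q n * η p q n u = (-p ^ (2 * n) : ℤ) • ω p q + (p ^ (2 * n) * B : ℤ) • 1 := by
  ext <;> simp [ω, η, κ, hB, -Int.cast_pow, -Int.cast_mul] <;> field_simp <;> ring

theorem κ_mul_κ : κ p q n * κ p q n = (-(p * q * p ^ (2 * n)) : ℤ) • 1 := by
  ext <;> simp [κ, -Int.cast_pow, -Int.cast_mul]
  ring

theorem range_basis : Set.range (basis p q n u) = {1, ω p q, η p q n u, κ p q n} := by
  simp only [basis, Matrix.range_cons, Matrix.range_empty, Set.union_empty, Set.singleton_union]

theorem mul_mem_span_basis (hq : (q : ℚ) ≠ 0) (hA : (p : ℤ) + 1 = 4 * A)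
    (hB : 1 - u * p = 2 * B) (hm : 1 + u ^ 2 * p = 4 * q * m) :
    ∀ a ∈ Set.range (basis p q n u), ∀ b ∈ Set.range (basis p q n u),
      a * b ∈ Submodule.span ℤ (Set.range (basis p q n u)) := by
  replace hA : (A : ℚ) = (p + 1) / 4 := by
    rw [eq_div_iff four_ne_zero]; exact_mod_cast (by linarith : A * 4 = (p : ℤ) + 1)
  replace hB : (B : ℚ) = (1 - u * p) / 2 := by
    rw [eq_div_iff two_ne_zero]; exact_mod_cast (by linarith : B * 2 = 1 - u * p)
  replace hm : (m : ℚ) = (1 + u ^ 2 * p) / (4 * q) := by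
    rw [eq_div_iff (by positivity)]
    exact_mod_cast (by linarith : m * (4 * q) = 1 + u ^ 2 * p)
  have mem : ∀ a ∈ Set.range (basis p q n u),
      a ∈ Submodule.span ℤ (Set.range (basis p q n u)) :=
    fun _ ha => Submodule.subset_span ha
  simp only [range_basis, Set.mem_insert_iff, Set.mem_singleton_iff, forall_eq_or_imp,
    forall_eq] at mem ⊢
  obtain ⟨h1, hω, hη, hκ⟩ := mem
  simp only [one_mul, mul_one, ω_mul_ω hA, ω_mul_η hq hB hm, η_mul_ω hq hB hm, ω_mul_κ hq hB,
    κ_mul_ω hq hB, η_mul_η hq hm, η_mul_κ hq hB, κ_mul_η hq hB, κ_mul_κ]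
  refine ⟨⟨?_, ?_, ?_, ?_⟩, ⟨?_, ?_, ?_, ?_⟩, ⟨?_, ?_, ?_, ?_⟩, ⟨?_, ?_, ?_, ?_⟩⟩ <;>
    apply_rules [add_mem, Submodule.smul_mem]

theorem det_gram_basis (hq : (q : ℚ) ≠ 0) :
    (Matrix.of fun s t => (basis p q n u s * basis p q n u t +
      star (basis p q n u s * basis p q n u t)).re).det = -(p : ℚ) ^ (2 * (2 * n + 1)) := by
  have hgram : (Matrix.of fun s t => (basis p q n u s * basis p q n u t +
      star (basis p q n u s * basis p q n u t)).re) =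
      (!![2, 1, 0, 0;
         1, (1 - p) / 2, 0, 0;
         0, 0, -(p : ℚ) ^ (2 * n) * (1 + u ^ 2 * p) / (2 * q), -(p : ℚ) ^ (2 * n) * u * p;
         0, 0, -(p : ℚ) ^ (2 * n) * u * p, -2 * p * q * (p : ℚ) ^ (2 * n)] :
        Matrix (Fin 4) (Fin 4) ℚ) := by
    ext s t
    fin_cases s <;> fin_cases t <;> simp [basis, ω, η, κ] <;> field_simp <;> ring
  rw [hgram]
  simp [Matrix.det_succ_row_zero, Fin.sum_univ_succ,
    show (1 : Fin 4).succAbove 2 = 3 from rfl]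
  field_simp
  ring

end OddLevelOrder

open OddLevelOrder in
theorem order_level_p_odd_power_p3mod4_general
    (p q : ℕ)
    (hp4 : p % 4 = 3) (hq8 : q % 8 = 1)
    (n : ℕ) (x v w u : ℤ)
    (hx : x ^ 2 ≡ -(p : ℤ) [ZMOD (q : ℤ)])
    (hvw : v * (q : ℤ) + w * (2 * x) = 1)
    (hu : u ≡ v * (q : ℤ) + 2 * w [ZMOD 2 * (q : ℤ)])
    (e : Fin 4 → ℍ[ℚ, -(p : ℚ), -(q : ℚ)])
    (he : e = ![1,
                ⟨1 / 2, 1 / 2, 0, 0⟩,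
                ⟨0, 0, (p : ℚ) ^ n / (2 * q), (p : ℚ) ^ n * (u : ℚ) / (2 * q)⟩,
                ⟨0, 0, 0, (p : ℚ) ^ n⟩])
    (S : Submodule ℤ ℍ[ℚ, -(p : ℚ), -(q : ℚ)])
    (hS : S = Submodule.span ℤ (Set.range e)) :
    (1 : ℍ[ℚ, -(p : ℚ), -(q : ℚ)]) ∈ S ∧
    (∀ u' ∈ S, ∀ v' ∈ S, u' * v' ∈ S) ∧
    LinearIndependent ℚ e ∧
    |(Matrix.of fun s t : Fin 4 => (e s * e t + star (e s * e t)).re).det| =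
      (p : ℚ) ^ (2 * (2 * n + 1)) := by
  have hpz : (p : ℤ) % 4 = 3 := by exact_mod_cast hp4
  have hq : (q : ℚ) ≠ 0 := by exact_mod_cast (by omega : q ≠ 0)
  have hu_odd : Odd u := Int.odd_of_modEq_mul_add_two_mul hvw hu
  obtain ⟨A, hA⟩ : (4 : ℤ) ∣ p + 1 := by omega
  obtain ⟨B, hB⟩ : 2 ∣ 1 - u * p :=
    even_iff_two_dvd.mp (odd_one.sub_odd (hu_odd.mul (Int.odd_iff.mpr (by omega))))
  obtain ⟨m, hm⟩ := Int.four_mul_dvd_one_add_sq_mul_of_sq_modEq_neg hpz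
    (Int.odd_iff.mpr (by omega)) hx hvw hu
  have hbasis : e = basis p q n u := he
  subst hbasis hS
  have hdet := det_gram_basis (p := p) (n := n) (u := u) hq
  refine ⟨Submodule.subset_span ⟨0, rfl⟩, fun a ha b hb => ?_, ?_, ?_⟩
  · exact Submodule.mul_mem_span_of_mul_mem (mul_mem_span_basis hq hA hB hm) ha hb
  · have hp : (p : ℚ) ≠ 0 := by exact_mod_cast (by omega : p ≠ 0)
    exact (QuaternionAlgebra.trdForm ℚ _ _ _).linearIndependent_of_det_gram_ne_zero
      (ne_of_eq_of_ne hdet (neg_ne_zero.mpr (pow_ne_zero _ hp)))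
  · rw [hdet, abs_neg, abs_of_nonneg (by positivity)]

/-- For primes `p ≡ 3 (mod 4)`, `q ≡ 1 (mod 8)`, `(q|p) = 1`, the ℤ-span of
`1`, `(1+i)/2`, `pⁿ(j + u·k)/(2q)`, `pⁿ·k` in `ℍ[ℚ, -p, -q]` is an order of
level `p^(2n+1)`. -/
theorem order_level_p_odd_power_p3mod4
    (p q : ℕ) [Fact p.Prime] [Fact q.Prime]
    (hp4 : p % 4 = 3) (hq8 : q % 8 = 1) (hleg : legendreSym p q = 1)
    (n : ℕ) (x v w u : ℤ)
    (hx : x ^ 2 ≡ -(p : ℤ) [ZMOD (q : ℤ)])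
    (hvw : v * (q : ℤ) + w * (2 * x) = 1)
    (hu0 : 0 ≤ u) (hult : u < 2 * (q : ℤ))
    (hu : u ≡ v * (q : ℤ) + 2 * w [ZMOD 2 * (q : ℤ)])
    (e : Fin 4 → ℍ[ℚ, -(p : ℚ), -(q : ℚ)])
    (he : e = ![1,
                ⟨1 / 2, 1 / 2, 0, 0⟩,
                ⟨0, 0, (p : ℚ) ^ n / (2 * q), (p : ℚ) ^ n * (u : ℚ) / (2 * q)⟩,
                ⟨0, 0, 0, (p : ℚ) ^ n⟩])
    (S : Submodule ℤ ℍ[ℚ, -(p : ℚ), -(q : ℚ)])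
    (hS : S = Submodule.span ℤ (Set.range e)) :
    (1 : ℍ[ℚ, -(p : ℚ), -(q : ℚ)]) ∈ S ∧
    (∀ u' ∈ S, ∀ v' ∈ S, u' * v' ∈ S) ∧
    LinearIndependent ℚ e ∧
    |(Matrix.of fun s t : Fin 4 => (e s * e t + star (e s * e t)).re).det| =
      (p : ℚ) ^ (2 * (2 * n + 1)) :=
  order_level_p_odd_power_p3mod4_general p q hp4 hq8 n x v w u hx hvw hu e he S hS
end

section
/- Let p and q be primes with p ≡ 3 (mod 4), q ≡ 1 (mod 8), and (q|p) = 1. Let n ≥ 1 and r = 2n. In B = ℍ[ℚ, −p, −q], choose an integer x with x² ≡ −p (mod q), integers v, w with v·q + w·(2x) = 1, and an integer u with 0 ≤ u < 2q and u ≡ v·q + 2·w (mod 2q). Set e₁ = 1, e₂ = (1 + i)/2, e₃ = pⁿ·(j + u·k)/(2q), e₄ = p^{n−1}·k in B (this is the basis of the general theorem with f = p^{n−1}, g = 1, h = p). Then the ℤ-submodule S of B spanned by e₁, e₂, e₃, e₄ satisfies: (i) 1 ∈ S; (ii) S is closed under multiplication; (iii) e₁, e₂, e₃, e₄ are linearly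 independent over ℚ; and (iv) the 4×4 rational matrix M with entries M(s,t) = trd(e_s·e_t) has |det M| = p^{4n}. That is, S is an order of level N = p^r = p^{2n} in the definite quaternion algebra of discriminant p. -/
/-!
With `β = p^(n-1)`, every product of two basis vectors is an integral combination of the basis:
the structure constants are built from `(p+1)/4`, `(1 ± up)/2`, `(1 + pu²)/(4q)` and `pβ²`.
These are integers because `p ≡ 3 (mod 4)`, `u` is odd, and `q ∣ 1 + pu²`, the last since
`ux ≡ 1 (mod q)` and `x² ≡ -p (mod q)`. The Gram determinant of the reduced trace form is a
direct computation, `-(pβ)⁴ = -p^(4n)`.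
-/

open Quaternion Submodule

theorem Submodule.mul_mem_span_range {R A ι : Type*} [CommSemiring R] [Semiring A] [Algebra R A]
    {e : ι → A} (he : ∀ i j, e i * e j ∈ span R (Set.range e)) {a b : A}
    (ha : a ∈ span R (Set.range e)) (hb : b ∈ span R (Set.range e)) :
    a * b ∈ span R (Set.range e) := by
  refine mul_le.1 ?_ a ha b hb
  rw [span_mul_span, span_le]
  rintro _ ⟨_, ⟨i, rfl⟩, _, ⟨j, rfl⟩, rfl⟩
  exact he i j

namespace Int

variable {p q x v w u : ℤ}

theorem dvd_one_add_mul_sq (hx : x ^ 2 ≡ -p [ZMOD q]) (hvw : v * q + w * (2 * x) = 1)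
    (hu : u ≡ v * q + 2 * w [ZMOD q]) : q ∣ 1 + p * u ^ 2 := by
  have hux : u * x ≡ 1 [ZMOD q] := calc
    u * x ≡ (v * q + 2 * w) * x [ZMOD q] := hu.mul_right x
    _ = 1 + q * (v * x - v) := by linear_combination hvw
    _ ≡ 1 [ZMOD q] := modEq_iff_dvd.2 ⟨v - v * x, by ring⟩
  refine modEq_zero_iff_dvd.1 ?_
  calc 1 + p * u ^ 2 = 1 - -p * u ^ 2 := by ring
    _ ≡ 1 - x ^ 2 * u ^ 2 [ZMOD q] := ((hx.mul_right (u ^ 2)).sub_left 1).symm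
    _ = 1 - (u * x) ^ 2 := by ring
    _ ≡ 1 - 1 ^ 2 [ZMOD q] := (hux.pow 2).sub_left 1
    _ = 0 := by ring

theorem odd_of_mul_add_mul_two_mul_eq_one (hvw : v * q + w * (2 * x) = 1) : Odd q :=
  (Int.odd_mul (m := v)).1 ⟨-(w * x), by linear_combination hvw⟩ |>.2

theorem odd_of_modEq_mul_add_two_mul_s9 (hvw : v * q + w * (2 * x) = 1)
    (hu : u ≡ v * q + 2 * w [ZMOD 2 * q]) : Odd u := by
  obtain ⟨k, hk⟩ := (hu.of_mul_right q).dvd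
  exact ⟨w - w * x - k, by linear_combination hvw - hk⟩

theorem four_dvd_one_add_mul_sq (hp : p % 4 = 3) (hu : Odd u) : 4 ∣ 1 + p * u ^ 2 := by
  rw [Int.dvd_iff_emod_eq_zero, Int.add_emod, Int.mul_emod, hp, Int.sq_mod_four_eq_one_of_odd hu]
  rfl

theorem four_mul_dvd_one_add_mul_sq (hp : p % 4 = 3) (hx : x ^ 2 ≡ -p [ZMOD q])
    (hvw : v * q + w * (2 * x) = 1) (hu : u ≡ v * q + 2 * w [ZMOD 2 * q]) :
    4 * q ∣ 1 + p * u ^ 2 :=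
  have hcop : IsCoprime ((2 : ℤ) ^ 2) q :=
    (isCoprime_two_left.2 (odd_of_mul_add_mul_two_mul_eq_one hvw)).pow_left
  hcop.mul_dvd (four_dvd_one_add_mul_sq hp (odd_of_modEq_mul_add_two_mul_s9 hvw hu))
    (dvd_one_add_mul_sq hx hvw (hu.of_mul_left 2))

end Int

def orderBasis (p q : ℕ) (u : ℤ) (β : ℚ) : Fin 4 → ℍ[ℚ, -(p : ℚ), -(q : ℚ)] :=
  ![1, ⟨1 / 2, 1 / 2, 0, 0⟩, ⟨0, 0, p * β / (2 * q), p * β * u / (2 * q)⟩, ⟨0, 0, 0, β⟩]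

variable {p q : ℕ} {u : ℤ} {β : ℚ}

theorem orderBasis_linearIndependent (hp : p ≠ 0) (hq : q ≠ 0) (hβ : β ≠ 0) :
    LinearIndependent ℚ (orderBasis p q u β) := by
  rw [Fintype.linearIndependent_iff]
  intro g hg
  simp [Fin.sum_univ_four, orderBasis, QuaternionAlgebra.ext_iff, hp, hq, hβ] at hg
  obtain ⟨h0, h1, h2, h3⟩ := hg
  intro i
  fin_cases i <;> simp_all

theorem orderBasis_mul_mem_span (hp : p % 4 = 3) (hu : Odd u)
    (hpu : 4 * (q : ℤ) ∣ 1 + p * u ^ 2) (hβ : ∃ z : ℤ, p * β ^ 2 = z) (i j : Fin 4) :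
    orderBasis p q u β i * orderBasis p q u β j ∈ span ℤ (Set.range (orderBasis p q u β)) := by
  have hq : (q : ℚ) ≠ 0 := by
    rintro hq
    rw [Nat.cast_eq_zero.1 hq, Nat.cast_zero, mul_zero, zero_dvd_iff] at hpu
    nlinarith [sq_nonneg u]
  have hp' : Odd (p : ℤ) := Int.odd_iff.2 (by omega)
  have hup : Odd (u * p) := hu.mul hp'
  obtain ⟨c, hc⟩ : ∃ c : ℤ, (c : ℚ) = (p + 1) / 4 :=
    ⟨((p : ℤ) + 1) / 4, by rw [Int.cast_div (by omega) (by norm_num)]; push_cast; ring⟩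
  obtain ⟨t, ht⟩ : ∃ t : ℤ, (t : ℚ) = (1 + p * u ^ 2) / (4 * q) :=
    ⟨_, by rw [Int.cast_div hpu (by simpa using hq)]; push_cast; ring⟩
  obtain ⟨a, ha⟩ : ∃ a : ℤ, (a : ℚ) = (1 - u * p) / 2 :=
    ⟨_, by rw [Int.cast_div (odd_one.sub_odd hup).two_dvd (by norm_num)]; push_cast; ring⟩
  obtain ⟨b, hb⟩ : ∃ b : ℤ, (b : ℚ) = (1 + u * p) / 2 :=
    ⟨_, by rw [Int.cast_div (odd_one.add_odd hup).two_dvd (by norm_num)]; push_cast; ring⟩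
  obtain ⟨z, hz⟩ := hβ
  rw [mem_span_range_iff_exists_fun]
  -- entry `i j` of the table is the coordinate vector of `e i * e j`
  refine ⟨![![![1, 0, 0, 0], ![0, 1, 0, 0], ![0, 0, 1, 0], ![0, 0, 0, 1]],
            ![![0, 1, 0, 0], ![-c, 1, 0, 0], ![0, 0, a, p * t], ![0, 0, -q, b]],
            ![![0, 0, 1, 0], ![0, 0, b, -p * t], ![-p * z * t, 0, 0, 0], ![-z * b, z, 0, 0]],
            ![![0, 0, 0, 1], ![0, 0, q, a], ![z * a, -z, 0, 0], ![-z * q, 0, 0, 0]]] i j, ?_⟩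
  fin_cases i <;> fin_cases j <;> ext <;>
    simp [Fin.sum_univ_four, orderBasis, hc, ht, ha, hb, ← hz] <;> field_simp <;> ring

theorem det_trd_orderBasis (hq : q ≠ 0) :
    (Matrix.of fun s t : Fin 4 => (orderBasis p q u β s * orderBasis p q u β t +
      star (orderBasis p q u β s * orderBasis p q u β t)).re).det = -((p : ℚ) * β) ^ 4 := by
  rw [Matrix.det_succ_row_zero, Fin.sum_univ_four]
  simp [Matrix.det_fin_three, Fin.succAbove, orderBasis, QuaternionAlgebra.re_mul, Fin.lt_def]
  field_simp
  ring

theorem order_level_p_even_power_p3mod4_general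
    (p q : ℕ)
    (hp4 : p % 4 = 3)
    (n : ℕ) (hn : 1 ≤ n) (x v w u : ℤ)
    (hx : x ^ 2 ≡ -(p : ℤ) [ZMOD (q : ℤ)])
    (hvw : v * (q : ℤ) + w * (2 * x) = 1)
    (hu : u ≡ v * (q : ℤ) + 2 * w [ZMOD 2 * (q : ℤ)])
    (e : Fin 4 → ℍ[ℚ, -(p : ℚ), -(q : ℚ)])
    (he : e = ![1,
                ⟨1 / 2, 1 / 2, 0, 0⟩,
                ⟨0, 0, (p : ℚ) ^ n / (2 * q), (p : ℚ) ^ n * (u : ℚ) / (2 * q)⟩,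
                ⟨0, 0, 0, (p : ℚ) ^ (n - 1)⟩])
    (S : Submodule ℤ ℍ[ℚ, -(p : ℚ), -(q : ℚ)])
    (hS : S = Submodule.span ℤ (Set.range e)) :
    (1 : ℍ[ℚ, -(p : ℚ), -(q : ℚ)]) ∈ S ∧
    (∀ u' ∈ S, ∀ v' ∈ S, u' * v' ∈ S) ∧
    LinearIndependent ℚ e ∧
    |(Matrix.of fun s t : Fin 4 => (e s * e t + star (e s * e t)).re).det| =
      (p : ℚ) ^ (4 * n) := by
  obtain ⟨m, rfl⟩ : ∃ m, n = m + 1 := ⟨n - 1, by omega⟩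
  have he' : e = orderBasis p q u ((p : ℚ) ^ m) := by
    rw [he, orderBasis, add_tsub_cancel_right, pow_succ']
  subst hS he'
  have hp : p ≠ 0 := by omega
  have hq : q ≠ 0 := by
    rintro rfl
    simpa using Int.odd_of_mul_add_mul_two_mul_eq_one hvw
  refine ⟨subset_span ⟨0, rfl⟩, fun a ha b hb => mul_mem_span_range ?_ ha hb,
    orderBasis_linearIndependent hp hq (by positivity), ?_⟩
  · exact orderBasis_mul_mem_span hp4 (Int.odd_of_modEq_mul_add_two_mul_s9 hvw hu)
      (Int.four_mul_dvd_one_add_mul_sq (by omega) hx hvw hu)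
      ⟨p ^ (2 * m + 1), by push_cast; ring⟩
  · rw [det_trd_orderBasis hq, abs_neg, ← pow_succ', ← pow_mul, abs_of_nonneg (by positivity),
      mul_comm]

/-- For primes `p ≡ 3 (mod 4)`, `q ≡ 1 (mod 8)`, `(q|p) = 1`, and `n ≥ 1`, the
ℤ-span of `1`, `(1+i)/2`, `pⁿ(j + u·k)/(2q)`, `p^(n-1)·k` in `ℍ[ℚ, -p, -q]` is
an order of level `p^(2n)`. -/
theorem order_level_p_even_power_p3mod4
    (p q : ℕ) [Fact p.Prime] [Fact q.Prime]
    (hp4 : p % 4 = 3) (hq8 : q % 8 = 1) (hleg : legendreSym p q = 1)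
    (n : ℕ) (hn : 1 ≤ n) (x v w u : ℤ)
    (hx : x ^ 2 ≡ -(p : ℤ) [ZMOD (q : ℤ)])
    (hvw : v * (q : ℤ) + w * (2 * x) = 1)
    (hu0 : 0 ≤ u) (hult : u < 2 * (q : ℤ))
    (hu : u ≡ v * (q : ℤ) + 2 * w [ZMOD 2 * (q : ℤ)])
    (e : Fin 4 → ℍ[ℚ, -(p : ℚ), -(q : ℚ)])
    (he : e = ![1,
                ⟨1 / 2, 1 / 2, 0, 0⟩,
                ⟨0, 0, (p : ℚ) ^ n / (2 * q), (p : ℚ) ^ n * (u : ℚ) / (2 * q)⟩,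
                ⟨0, 0, 0, (p : ℚ) ^ (n - 1)⟩])
    (S : Submodule ℤ ℍ[ℚ, -(p : ℚ), -(q : ℚ)])
    (hS : S = Submodule.span ℤ (Set.range e)) :
    (1 : ℍ[ℚ, -(p : ℚ), -(q : ℚ)]) ∈ S ∧
    (∀ u' ∈ S, ∀ v' ∈ S, u' * v' ∈ S) ∧
    LinearIndependent ℚ e ∧
    |(Matrix.of fun s t : Fin 4 => (e s * e t + star (e s * e t)).re).det| =
      (p : ℚ) ^ (4 * n) :=
  order_level_p_even_power_p3mod4_general p q hp4 n hn x v w u hx hvw hu e he S hS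
end

section
/- Let q be a prime with q ≡ 1 (mod 8), and let R and M be disjoint finite sets of odd primes, none equal to q, such that the cardinality of R is odd and ∏_{p ∈ R ∪ M} p ≡ 3 (mod 4). Suppose the Legendre symbol (−q|p) = −1 for every p ∈ R and (−q|p) = 1 for every p ∈ M. Then the Legendre symbol (a|q) = 1, where a = −∏_{p ∈ R ∪ M} p. (Hence with b = −q, the quaternion algebra ℍ[ℚ, a, b] splits at q.) -/
open ZMod

/-- If `q ≡ 1 (mod 8)` is prime, `R` and `M` are disjoint finite sets of odd
primes (all `≠ q`) with `|R|` odd and `∏_{p ∈ R ∪ M} p ≡ 3 (mod 4)`, and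
`(-q|p) = -1` for `p ∈ R`, `(-q|p) = 1` for `p ∈ M`, then with
`a = -∏_{p ∈ R ∪ M} p` we have `(a|q) = 1`. -/
theorem legendre_a_at_q_eq_one_case1a
    (q : ℕ) [Fact q.Prime] (hq8 : q % 8 = 1)
    (R M : Finset ℕ) (hdisj : Disjoint R M)
    (hR : ∀ p ∈ R, p.Prime ∧ p ≠ 2 ∧ p ≠ q)
    (hM : ∀ p ∈ M, p.Prime ∧ p ≠ 2 ∧ p ≠ q)
    (hcard : Odd R.card)
    (hprod : (∏ p ∈ R ∪ M, p) % 4 = 3)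
    (hlegR : ∀ p, ∀ hp : p ∈ R, @legendreSym p ⟨(hR p hp).1⟩ (-(q : ℤ)) = -1)
    (hlegM : ∀ p, ∀ hp : p ∈ M, @legendreSym p ⟨(hM p hp).1⟩ (-(q : ℤ)) = 1) :
    legendreSym q (-(∏ p ∈ R ∪ M, (p : ℤ))) = 1 := by
  classical
  have hq4 : q % 4 = 1 := by omega
  have key : ∀ p : ℕ, p.Prime → p ≠ 2 → p ≠ q →
      ∀ _ : Fact p.Prime, legendreSym q (p : ℤ) = χ₄ p * legendreSym p (-(q : ℤ)) := by
    intro p hpp hp2 hpq inst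
    have hrec : legendreSym q (p : ℤ) = legendreSym p (q : ℤ) :=
      (legendreSym.quadratic_reciprocity_one_mod_four (p := q) (q := p) hq4 hp2).symm
    have hmul : legendreSym p (-(q : ℤ)) = legendreSym p (-1) * legendreSym p (q : ℤ) := by
      rw [← legendreSym.mul]; ring_nf
    have hne : legendreSym p (-1) = χ₄ p := legendreSym.at_neg_one hp2
    have hodd : p % 2 = 1 := (hpp.eq_two_or_odd).resolve_left hp2
    have h14 : p % 4 = 1 ∨ p % 4 = 3 := by omega
    rcases h14 with h | h
    · have hχ : χ₄ (p : ZMod 4) = 1 := χ₄_nat_one_mod_four h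
      rw [hrec, hmul, hne, hχ, one_mul, one_mul]
    · have hχ : χ₄ (p : ZMod 4) = -1 := χ₄_nat_three_mod_four h
      rw [hrec, hmul, hne, hχ, neg_one_mul, neg_one_mul, neg_neg]
  -- split the symbol of the product
  have hsplit : legendreSym q (-(∏ p ∈ R ∪ M, (p : ℤ))) =
      legendreSym q (-1) * ∏ p ∈ R ∪ M, legendreSym q (p : ℤ) := by
    rw [show -(∏ p ∈ R ∪ M, (p : ℤ)) = (-1) * ∏ p ∈ R ∪ M, (p : ℤ) by ring,
      legendreSym.mul]
    congr 1
    exact map_prod (legendreSym.hom q) _ _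
  have hRval : ∀ p ∈ R, legendreSym q (p : ℤ) = -χ₄ p := by
    intro p hp
    obtain ⟨hpp, hp2, hpq⟩ := hR p hp
    haveI inst : Fact p.Prime := ⟨hpp⟩
    rw [key p hpp hp2 hpq inst, hlegR p hp]; ring
  have hMval : ∀ p ∈ M, legendreSym q (p : ℤ) = χ₄ p := by
    intro p hp
    obtain ⟨hpp, hp2, hpq⟩ := hM p hp
    haveI inst : Fact p.Prime := ⟨hpp⟩
    rw [key p hpp hp2 hpq inst, hlegM p hp]; ring
  have hprodχ : ∏ p ∈ R ∪ M, χ₄ (p : ZMod 4) = -1 := by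
    have : ∏ p ∈ R ∪ M, χ₄ (p : ZMod 4) = χ₄ ((∏ p ∈ R ∪ M, p : ℕ) : ZMod 4) := by
      rw [Nat.cast_prod, map_prod]
    rw [this, χ₄_nat_three_mod_four hprod]
  have hprodsym : ∏ p ∈ R ∪ M, legendreSym q (p : ℤ) = 1 := by
    rw [Finset.prod_union hdisj, Finset.prod_congr rfl hRval, Finset.prod_congr rfl hMval]
    have : ∏ p ∈ R, (-χ₄ (p : ZMod 4)) = (-1) ^ R.card * ∏ p ∈ R, χ₄ (p : ZMod 4) := by
      rw [← Finset.prod_const, ← Finset.prod_mul_distrib]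
      exact Finset.prod_congr rfl fun p _ => by ring
    rw [this, Odd.neg_one_pow hcard, mul_assoc, ← Finset.prod_union hdisj, hprodχ]
    ring
  have hq2 : q ≠ 2 := by rintro rfl; omega
  rw [hsplit, hprodsym, legendreSym.at_neg_one hq2, χ₄_nat_one_mod_four hq4, mul_one]
end

section
/- Let q be a prime with q ≡ 3 (mod 8), and let R' and M be disjoint finite sets of odd primes, none equal to q, such that the cardinality of R' is even. Suppose the Legendre symbol (−q|p) = −1 for every p ∈ R' and (−q|p) = 1 for every p ∈ M. Then the Legendre symbol (b|q) = 1, where b = −2·∏_{p ∈ R' ∪ M} p. (This is the verification, in the case where 2 ramifies in the quaternion algebra, that the algebra splits at the auxiliary prime q.) -/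
/-- Key reciprocity step: if `q ≡ 3 (mod 4)` and `p` is an odd prime `≠ q`, then
`(p|q) = (-q|p)`. -/
theorem legendre_flip (q p : ℕ) [Fact q.Prime] [Fact p.Prime]
    (hq4 : q % 4 = 3) (hp2 : p ≠ 2) :
    legendreSym q (p : ℤ) = legendreSym p (-(q : ℤ)) := by
  have hq2 : q ≠ 2 := by omega
  have hsplit : legendreSym p (-(q : ℤ)) = legendreSym p (-1) * legendreSym p q := by
    rw [← legendreSym.mul]; ring_nf
  rw [hsplit, legendreSym.at_neg_one hp2]
  have hpodd : p % 2 = 1 := Nat.Prime.eq_two_or_odd (Fact.out) |>.resolve_left hp2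
  have hp4 : p % 4 = 1 ∨ p % 4 = 3 := by omega
  rcases hp4 with h | h
  · rw [legendreSym.quadratic_reciprocity_one_mod_four h hq2, ZMod.χ₄_nat_one_mod_four h,
      one_mul]
  · rw [legendreSym.quadratic_reciprocity_three_mod_four h hq4, ZMod.χ₄_nat_three_mod_four h,
      neg_one_mul]

theorem legendre_prod (q : ℕ) [Fact q.Prime] (s : Finset ℕ) :
    legendreSym q (∏ p ∈ s, (p : ℤ)) = ∏ p ∈ s, legendreSym q (p : ℤ) := by
  induction s using Finset.cons_induction with
  | empty => simp [legendreSym]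
  | cons a s ha ih => rw [Finset.prod_cons, legendreSym.mul, ih, Finset.prod_cons]

/-- If `q ≡ 3 (mod 8)` is prime, `R'` and `M` are disjoint finite sets of odd
primes (all `≠ q`) with `|R'|` even, and `(-q|p) = -1` for `p ∈ R'`,
`(-q|p) = 1` for `p ∈ M`, then with `b = -2·∏_{p ∈ R' ∪ M} p` we have
`(b|q) = 1`. -/
theorem legendre_b_at_q_eq_one_two_ramified
    (q : ℕ) [Fact q.Prime] (hq8 : q % 8 = 3)
    (R' M : Finset ℕ) (hdisj : Disjoint R' M)
    (hR' : ∀ p ∈ R', p.Prime ∧ p ≠ 2 ∧ p ≠ q)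
    (hM : ∀ p ∈ M, p.Prime ∧ p ≠ 2 ∧ p ≠ q)
    (hcard : Even R'.card)
    (hlegR' : ∀ p, ∀ hp : p ∈ R', @legendreSym p ⟨(hR' p hp).1⟩ (-(q : ℤ)) = -1)
    (hlegM : ∀ p, ∀ hp : p ∈ M, @legendreSym p ⟨(hM p hp).1⟩ (-(q : ℤ)) = 1) :
    legendreSym q (-2 * ∏ p ∈ R' ∪ M, (p : ℤ)) = 1 := by
  have hq2 : q ≠ 2 := by omega
  have hq4 : q % 4 = 3 := by omega
  rw [legendreSym.mul, legendreSym.at_neg_two hq2]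
  have hχ : ZMod.χ₈' (q : ZMod 8) = 1 := by
    rw [← ZMod.natCast_mod q 8, hq8]; decide
  rw [hχ, legendre_prod, one_mul]
  rw [Finset.prod_union hdisj]
  have hR'prod : ∏ p ∈ R', legendreSym q (p : ℤ) = (-1) ^ R'.card := by
    rw [← Finset.prod_const]
    apply Finset.prod_congr rfl
    intro p hp
    haveI : Fact p.Prime := ⟨(hR' p hp).1⟩
    rw [legendre_flip q p hq4 (hR' p hp).2.1]
    exact hlegR' p hp
  have hMprod : ∏ p ∈ M, legendreSym q (p : ℤ) = 1 := by
    rw [Finset.prod_eq_one]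
    intro p hp
    haveI : Fact p.Prime := ⟨(hM p hp).1⟩
    rw [legendre_flip q p hq4 (hM p hp).2.1]
    exact hlegM p hp
  rw [hR'prod, hMprod, hcard.neg_one_pow, one_mul]
end
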